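/- arXiv:cs/0702077 — 8 statements merged into one kernel-verified Lean document; each statement's English description precedes it below -/
import Mathlib

section
/- Any vector x ∈ GF(q^m)^n of rank r belongs to a unique elementary linear subspace of dimension r; that is, there is exactly one V ∈ E_r(q^m,n) with x ∈ V. -/
open scoped BigOperators

noncomputable section

/-- The rank weight of a vector over the extension field `Fqm`, with respect to the base
field `Fq`: the dimension over `Fq` of the `Fq`-span of the coordinates. -/
def rankWeight (Fq : Type) {Fqm : Type} [Field Fq] [Field Fqm] [Algebra Fq Fqm]
    {n : ℕ} (x : Fin n → Fqm) : ℕ :=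
  Module.finrank Fq (Submodule.span Fq (Set.range x))

/-- An elementary linear subspace: a subspace generated by vectors all of whose
coordinates lie in the base field `Fq`. -/
def IsELS (Fq : Type) {Fqm : Type} [Field Fq] [Field Fqm] [Algebra Fq Fqm]
    {n : ℕ} (V : Submodule Fqm (Fin n → Fqm)) : Prop :=
  ∃ S : Set (Fin n → Fqm),
    (∀ s ∈ S, ∀ i, s i ∈ Set.range (algebraMap Fq Fqm)) ∧
    V = Submodule.span Fqm S

/-- The ball of rank radius `r` centered at `c`. -/
def rankBall (Fq : Type) {Fqm : Type} [Field Fq] [Field Fqm] [Algebra Fq Fqm]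
    {n : ℕ} (r : ℕ) (c : Fin n → Fqm) : Set (Fin n → Fqm) :=
  {y | rankWeight Fq (y - c) ≤ r}

/-- `V_r(q^m, n)`: the volume of a ball of rank radius `r`. -/
def ballVol (Fq Fqm : Type) [Field Fq] [Field Fqm] [Algebra Fq Fqm]
    (n r : ℕ) : ℕ :=
  Nat.card ↥(rankBall Fq r (0 : Fin n → Fqm))

/-- `K_R(q^m, n, ρ)`: minimum cardinality of a nonempty code of length `n` with rank
covering radius at most `ρ`. -/
def coveringNumber (Fq Fqm : Type) [Field Fq] [Field Fqm] [Algebra Fq Fqm]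
    (n ρ : ℕ) : ℕ :=
  sInf {k : ℕ | ∃ C : Finset (Fin n → Fqm), C.Nonempty ∧
    (∀ x : Fin n → Fqm, ∃ c ∈ C, rankWeight Fq (x - c) ≤ ρ) ∧ C.card = k}

/-- `σ(q) = (1/ln q) Σ_{k≥1} 1/(k(q^k - 1))`. -/
def sigmaQ (q : ℕ) : ℝ :=
  (1 / Real.log q) * ∑' k : ℕ, 1 / (((k : ℝ) + 1) * ((q : ℝ) ^ (k + 1) - 1))

/-- `α(e, u) = ∏_{i=0}^{u-1} (q^e - q^i)` (with integer exponent `e`). -/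
def alphaQ (q : ℕ) (e : ℤ) (u : ℕ) : ℚ :=
  ∏ i ∈ Finset.range u, ((q : ℚ) ^ e - (q : ℚ) ^ i)

/-- The Gaussian binomial `[n u]_q = α(n,u)/α(u,u)`. -/
def gaussQ (q n u : ℕ) : ℚ := alphaQ q n u / alphaQ q u u


open Matrix

section AuxELS

variable {Fq Fqm : Type} [Field Fq] [Field Fqm] [Algebra Fq Fqm] {n : ℕ}

/-- Embedding `Fq^n → Fqm^n` coordinatewise, as an `Fq`-linear map. -/
def embL (Fq Fqm : Type) [Field Fq] [Field Fqm] [Algebra Fq Fqm] (n : ℕ) :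
    (Fin n → Fq) →ₗ[Fq] (Fin n → Fqm) :=
  LinearMap.pi (fun i => (Algebra.linearMap Fq Fqm).comp (LinearMap.proj i))

@[simp] theorem embL_apply (u : Fin n → Fq) (i : Fin n) :
    embL Fq Fqm n u i = algebraMap Fq Fqm (u i) := rfl

/-- A family of vectors with coordinates in `Fq` that is `Fq`-linearly independent remains
linearly independent over `Fqm`. -/
theorem li_emb {κ : Type*} {w : κ → Fin n → Fq} (hw : LinearIndependent Fq w) :
    LinearIndependent Fqm (fun k => embL Fq Fqm n (w k)) := by
  rw [linearIndependent_iff'] at hw ⊢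
  intro s g hg k hk
  let B := Module.Basis.ofVectorSpace Fq Fqm
  have key : ∀ t, ∀ k ∈ s, B.repr (g k) t = 0 := by
    intro t
    refine hw s (fun k => B.repr (g k) t) ?_
    funext i
    have h1 : ∑ k ∈ s, (w k i) • g k = 0 := by
      have h0 := congrFun hg i
      simp only [Finset.sum_apply, Pi.smul_apply, Pi.zero_apply, embL_apply,
        smul_eq_mul] at h0
      rw [← h0]
      refine Finset.sum_congr rfl fun k _ => ?_
      rw [Algebra.smul_def, mul_comm]
    have h2 : ∑ k ∈ s, (w k i) • B.repr (g k) = 0 := by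
      calc ∑ k ∈ s, (w k i) • B.repr (g k)
          = ∑ k ∈ s, B.repr ((w k i) • g k) := by
            refine Finset.sum_congr rfl fun k _ => ?_
            rw [_root_.map_smul]
        _ = B.repr (∑ k ∈ s, (w k i) • g k) := (map_sum B.repr _ _).symm
        _ = 0 := by rw [h1, map_zero]
    have h3 := congrArg (fun f => f t) h2
    simp only [Finsupp.coe_finset_sum, Finset.sum_apply, Finsupp.smul_apply,
      Finsupp.coe_zero, Pi.zero_apply, smul_eq_mul] at h3
    simp only [Finset.sum_apply, Pi.smul_apply, Pi.zero_apply, smul_eq_mul]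
    rw [← h3]
    refine Finset.sum_congr rfl fun k _ => ?_
    exact mul_comm _ _
  have : B.repr (g k) = 0 := Finsupp.ext fun t => key t k hk
  simpa using congrArg B.repr.symm this

/-- The `Fqm`-span of embedded `Fq`-vectors has the same dimension as the `Fq`-span. -/
theorem finrank_span_emb (T : Set (Fin n → Fq)) :
    Module.finrank Fqm (Submodule.span Fqm (embL Fq Fqm n '' T)) =
      Module.finrank Fq (Submodule.span Fq T) := by
  classical
  obtain ⟨t, hts, hst, hli⟩ := exists_linearIndependent Fq T
  have ht : t.Finite := hli.setFinite
  letI := ht.fintype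
  have hspan2 : Submodule.span Fqm (embL Fq Fqm n '' T) =
      Submodule.span Fqm (embL Fq Fqm n '' t) := by
    refine le_antisymm ?_ (Submodule.span_mono (Set.image_mono hts))
    rw [Submodule.span_le]
    rintro _ ⟨u, hu, rfl⟩
    have hu2 : u ∈ Submodule.span Fq t := hst ▸ Submodule.subset_span hu
    have hmap : Submodule.map (embL Fq Fqm n) (Submodule.span Fq t) ≤
        (Submodule.span Fqm (embL Fq Fqm n '' t)).restrictScalars Fq := by
      rw [Submodule.map_span, Submodule.span_le]
      intro y hy
      exact Submodule.subset_span hy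
    exact hmap ⟨u, hu2, rfl⟩
  rw [hspan2]
  have hli2 : LinearIndependent Fqm (fun k : t => embL Fq Fqm n (k : Fin n → Fq)) :=
    li_emb hli
  have himg : embL Fq Fqm n '' t = Set.range (fun k : t => embL Fq Fqm n (k : Fin n → Fq)) := by
    rw [Set.image_eq_range]
  rw [himg, finrank_span_eq_card hli2, ← hst, finrank_span_set_eq_card hli,
    Set.toFinset_card]

end AuxELS

/-- Any vector of rank `r` belongs to a unique elementary linear subspace of dimension `r`. -/
theorem stmt0 (q m n r : ℕ) (Fq Fqm : Type) [Field Fq] [Fintype Fq] [Field Fqm] [Fintype Fqm]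
    [Algebra Fq Fqm] (hq : Fintype.card Fq = q) (hm : Module.finrank Fq Fqm = m)
    (x : Fin n → Fqm) (hx : rankWeight Fq x = r) :
    ∃! V : Submodule Fqm (Fin n → Fqm),
      (IsELS Fq V ∧ Module.finrank Fqm V = r) ∧ x ∈ V := by
  classical
  haveI : Module.Finite Fq Fqm := Module.Finite.of_finite
  set B := Module.finBasis Fq Fqm with hB
  set m' := Module.finrank Fq Fqm
  let c : Fin n → Fin m' → Fq := fun i j => B.repr (x i) j
  let w : Fin m' → Fin n → Fq := fun j i => c i j
  let v : Fin m' → Fin n → Fqm := fun j => embL Fq Fqm n (w j)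
  set V : Submodule Fqm (Fin n → Fqm) := Submodule.span Fqm (Set.range v) with hV
  -- x belongs to V
  have hxV : x ∈ V := by
    have hxsum : x = ∑ j, (B j : Fqm) • v j := by
      funext i
      rw [Finset.sum_apply]
      have := B.sum_repr (x i)
      calc x i = ∑ j, B.repr (x i) j • B j := (B.sum_repr (x i)).symm
        _ = ∑ j, (B j : Fqm) • v j i := by
            refine Finset.sum_congr rfl fun j _ => ?_
            rw [Algebra.smul_def, mul_comm]
            rfl
    rw [hxsum]
    exact Submodule.sum_mem _ fun j _ =>
      Submodule.smul_mem _ _ (Submodule.subset_span ⟨j, rfl⟩)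
  -- dimension of V is r
  have hdimV : Module.finrank Fqm V = r := by
    have hrange : Set.range v = embL Fq Fqm n '' Set.range w := by
      rw [← Set.range_comp]; rfl
    rw [hV, hrange, finrank_span_emb]
    -- column rank = row rank
    let M : Matrix (Fin n) (Fin m') Fq := Matrix.of c
    have hcols : Set.range w = Set.range M.col := rfl
    rw [hcols, ← Matrix.rank_eq_finrank_span_cols, Matrix.rank_eq_finrank_span_row]
    -- rows are the coordinate vectors of x
    let e : Fqm ≃ₗ[Fq] (Fin m' → Fq) :=
      B.repr.trans (Finsupp.linearEquivFunOnFinite Fq Fq (Fin m'))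
    have hrows : Set.range M.row = e '' Set.range x := by
      rw [← Set.range_comp]; rfl
    rw [hrows, show ⇑e '' Set.range x = ⇑e.toLinearMap '' Set.range x from by
      rw [LinearEquiv.coe_coe], ← Submodule.map_span, LinearEquiv.finrank_map_eq]
    exact hx
  refine ⟨V, ⟨⟨⟨Set.range v, ?_, hV⟩, hdimV⟩, hxV⟩, ?_⟩
  · rintro _ ⟨j, rfl⟩ i
    exact ⟨c i j, rfl⟩
  · rintro V' ⟨⟨⟨S, hScoord, rfl⟩, hdim'⟩, hxV'⟩
    -- It suffices to show V ≤ V'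
    have hVle : V ≤ Submodule.span Fqm S := by
      rw [hV, Submodule.span_le]
      rintro _ ⟨j, rfl⟩
      obtain ⟨a, hsupp, hsum⟩ := Submodule.mem_span_set.mp hxV'
      -- pick Fq-coordinates for the elements of S
      let σ : (Fin n → Fqm) → Fin n → Fq := fun s i =>
        if h : ∃ y : Fq, algebraMap Fq Fqm y = s i then h.choose else 0
      have hσ : ∀ s ∈ S, ∀ i, algebraMap Fq Fqm (σ s i) = s i := by
        intro s hs i
        have h : ∃ y : Fq, algebraMap Fq Fqm y = s i := hScoord s hs i
        simp only [σ, dif_pos h]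
        exact h.choose_spec
      have hvj : v j = ∑ s ∈ a.support, algebraMap Fq Fqm (B.repr (a s) j) • s := by
        funext i
        have hxi : x i = ∑ s ∈ a.support, (σ s i) • a s := by
          rw [← hsum]
          rw [Finsupp.sum, Finset.sum_apply]
          refine Finset.sum_congr rfl fun s hs => ?_
          show a s • s i = σ s i • a s
          rw [smul_eq_mul, Algebra.smul_def, hσ s (hsupp hs) i, mul_comm]
        have hrepr : B.repr (x i) j = ∑ s ∈ a.support, σ s i * B.repr (a s) j := by
          rw [hxi, map_sum]
          simp only [_root_.map_smul, Finsupp.coe_finset_sum, Finset.sum_apply,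
            Finsupp.smul_apply, smul_eq_mul]
        show algebraMap Fq Fqm (B.repr (x i) j) = _
        rw [hrepr, map_sum, Finset.sum_apply]
        refine Finset.sum_congr rfl fun s hs => ?_
        show algebraMap Fq Fqm (σ s i * (B.repr (a s)) j) =
          algebraMap Fq Fqm ((B.repr (a s)) j) • s i
        rw [_root_.map_mul, smul_eq_mul, hσ s (hsupp hs) i, mul_comm]
      rw [hvj]
      exact Submodule.sum_mem _ fun s hs =>
        Submodule.smul_mem _ _ (Submodule.subset_span (hsupp hs))
    exact (Submodule.eq_of_le_of_finrank_eq hVle (hdimV.trans hdim'.symm)).symm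

end
end

section
/- Let V ∈ E_v(q^m,n) and let u ∈ V have rank v. For any ELS's A ∈ E_a(q^m,n) and B ∈ E_{v−a}(q^m,n) with A ⊕ B = V, writing u = u_A + u_B with u_A ∈ A and u_B ∈ B, one has rk(u_A) = a and rk(u_B) = v−a. -/
open scoped BigOperators

noncomputable section

/-! An element of an ELS of dimension `d` is an `Fqm`-combination of `d` vectors with coordinates
in `Fq`, so its coordinates lie in the `Fq`-span of `d` coefficients and its rank is at most `d`.
With subadditivity of the rank, `rk uA ≤ a`, `rk uB ≤ v - a` and `v ≤ rk uA + rk uB` force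
equality. -/

section

variable {Fq Fqm : Type} [Field Fq] [Field Fqm] [Algebra Fq Fqm] {n : ℕ}

theorem rankWeight_add_le (x y : Fin n → Fqm) :
    rankWeight Fq (x + y) ≤ rankWeight Fq x + rankWeight Fq y := by
  have hle : Submodule.span Fq (Set.range (x + y)) ≤
      Submodule.span Fq (Set.range x) ⊔ Submodule.span Fq (Set.range y) := by
    rw [Submodule.span_le]
    rintro _ ⟨j, rfl⟩
    exact Submodule.add_mem_sup (Submodule.subset_span ⟨j, rfl⟩)
      (Submodule.subset_span ⟨j, rfl⟩)
  have := FiniteDimensional.span_of_finite Fq (Set.finite_range x)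
  have := FiniteDimensional.span_of_finite Fq (Set.finite_range y)
  exact (Submodule.finrank_mono hle).trans (Submodule.finrank_add_le_finrank_add_finrank _ _)

-- The coordinates of `∑ i, c i • w i` lie in the `Fq`-span of the coefficients `c i`.
theorem rankWeight_sum_smul_le {ι : Type*} [Fintype ι] (w : ι → Fin n → Fqm)
    (hw : ∀ i j, w i j ∈ Set.range (algebraMap Fq Fqm)) (c : ι → Fqm) :
    rankWeight Fq (∑ i, c i • w i) ≤ Fintype.card ι := by
  have hle :
      Submodule.span Fq (Set.range (∑ i, c i • w i)) ≤ Submodule.span Fq (Set.range c) := by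
    rw [Submodule.span_le]
    rintro _ ⟨j, rfl⟩
    simp only [Finset.sum_apply, Pi.smul_apply, smul_eq_mul]
    refine Submodule.sum_mem _ fun i _ => ?_
    obtain ⟨l, hl⟩ := hw i j
    rw [← hl, mul_comm, ← Algebra.smul_def]
    exact Submodule.smul_mem _ _ (Submodule.subset_span ⟨i, rfl⟩)
  have := FiniteDimensional.span_of_finite Fq (Set.finite_range c)
  exact (Submodule.finrank_mono hle).trans (finrank_range_le_card c)

theorem IsELS.rankWeight_le_finrank {V : Submodule Fqm (Fin n → Fqm)} (hV : IsELS Fq V)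
    {x : Fin n → Fqm} (hx : x ∈ V) :
    rankWeight Fq x ≤ Module.finrank Fqm V := by
  obtain ⟨S, hS, rfl⟩ := hV
  obtain ⟨t, htS, htspan, htind⟩ := exists_linearIndependent Fqm S
  have : Fintype t := htind.setFinite.fintype
  obtain ⟨c, rfl⟩ :=
    (Submodule.mem_span_range_iff_exists_fun Fqm (v := ((↑) : t → Fin n → Fqm))).1
      (by rwa [Subtype.range_coe, htspan])
  calc _ ≤ Fintype.card t :=
        rankWeight_sum_smul_le ((↑) : t → Fin n → Fqm) (fun i => hS i (htS i.2)) c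
    _ = Module.finrank Fqm (Submodule.span Fqm (Set.range ((↑) : t → Fin n → Fqm))) :=
        (finrank_span_eq_card htind).symm
    _ = Module.finrank Fqm (Submodule.span Fqm S) := by rw [Subtype.range_coe, htspan]

end

theorem stmt2_general (n v a : ℕ) (Fq Fqm : Type) [Field Fq] [Field Fqm]
    [Algebra Fq Fqm]
    (ha : a ≤ v)
    (A B : Submodule Fqm (Fin n → Fqm))
    (hA : IsELS Fq A) (hAdim : Module.finrank Fqm A = a)
    (hB : IsELS Fq B) (hBdim : Module.finrank Fqm B = v - a)
    (u uA uB : Fin n → Fqm) (hur : rankWeight Fq u = v)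
    (huA : uA ∈ A) (huB : uB ∈ B) (hsum : u = uA + uB) :
    rankWeight Fq uA = a ∧ rankWeight Fq uB = v - a := by
  have hA_le : rankWeight Fq uA ≤ a := hAdim ▸ hA.rankWeight_le_finrank huA
  have hB_le : rankWeight Fq uB ≤ v - a := hBdim ▸ hB.rankWeight_le_finrank huB
  have hv_le : v ≤ rankWeight Fq uA + rankWeight Fq uB :=
    hur ▸ hsum ▸ rankWeight_add_le uA uB
  omega

/-- Projections of a full-rank vector of an ELS onto complementary ELS's have full rank. -/
theorem stmt2 (q m n v a : ℕ) (Fq Fqm : Type) [Field Fq] [Fintype Fq] [Field Fqm] [Fintype Fqm]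
    [Algebra Fq Fqm] (hq : Fintype.card Fq = q) (hm : Module.finrank Fq Fqm = m)
    (ha : a ≤ v)
    (V A B : Submodule Fqm (Fin n → Fqm))
    (hV : IsELS Fq V) (hVdim : Module.finrank Fqm V = v)
    (hA : IsELS Fq A) (hAdim : Module.finrank Fqm A = a)
    (hB : IsELS Fq B) (hBdim : Module.finrank Fqm B = v - a)
    (hdisj : Disjoint A B) (hsup : A ⊔ B = V)
    (u uA uB : Fin n → Fqm) (hu : u ∈ V) (hur : rankWeight Fq u = v)
    (huA : uA ∈ A) (huB : uB ∈ B) (hsum : u = uA + uB) :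
    rankWeight Fq uA = a ∧ rankWeight Fq uB = v - a :=
  stmt2_general n v a Fq Fqm ha A B hA hAdim hB hBdim u uA uB hur huA huB hsum

end
end

section
/- For 0 ≤ r ≤ min{n,m}, the volume of a ball of rank radius r satisfies q^{r(m+n−r)} ≤ V_r(q^m,n) < q^{r(m+n−r)+σ(q)}, where σ(q) = (1/ln q)·Σ_{k=1}^∞ 1/(k(q^k−1)). -/
open scoped BigOperators

noncomputable section

/-! ### Auxiliary lemmas -/

open Module Submodule in
/-- Any subspace of finrank at most `k` extends to a subspace of finrank exactly `k`. -/
lemma aux_exists_ext {K V : Type} [Field K] [AddCommGroup V] [Module K V]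
    [FiniteDimensional K V] (k : ℕ) (U : Submodule K V) (h1 : finrank K U ≤ k)
    (h2 : k ≤ finrank K V) : ∃ W : Submodule K V, U ≤ W ∧ finrank K W = k := by
  induction k with
  | zero => exact ⟨U, le_rfl, Nat.le_zero.mp h1⟩
  | succ k ih =>
    rcases eq_or_lt_of_le h1 with h | h
    · exact ⟨U, le_rfl, h⟩
    · obtain ⟨W, hUW, hWk⟩ := ih (by omega) (by omega)
      have hWne : W ≠ ⊤ := by
        intro hW
        rw [hW, finrank_top] at hWk
        omega
      obtain ⟨x, hx⟩ : ∃ x : V, x ∉ W := by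
        by_contra hc
        push_neg at hc
        exact hWne (eq_top_iff.2 fun y _ => hc y)
      refine ⟨W ⊔ (K ∙ x), le_trans hUW le_sup_left, ?_⟩
      have hdisj : W ⊓ (K ∙ x) = ⊥ := by
        rw [← disjoint_iff]
        exact Submodule.disjoint_span_singleton.2 fun hxW => absurd hxW hx
      have hx0 : x ≠ 0 := fun h0 => hx (h0 ▸ W.zero_mem)
      have := Submodule.finrank_sup_add_finrank_inf_eq W (K ∙ x)
      rw [hdisj, finrank_bot, finrank_span_singleton hx0, hWk] at this
      omega

set_option maxHeartbeats 1000000 in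
/-- The key analytic inequality: the partial sums of `∑ -log(1-q^{-j})` are strictly
less than `∑_k 1/(k (q^k - 1))`. -/
lemma aux_sum_log_lt (q : ℕ) (hq : 2 ≤ q) (r : ℕ) :
    ∑ j ∈ Finset.range r, (-Real.log (1 - ((q : ℝ))⁻¹ ^ (j + 1))) <
      ∑' k : ℕ, 1 / (((k : ℝ) + 1) * ((q : ℝ) ^ (k + 1) - 1)) := by
  set Q : ℝ := (q : ℝ) with hQdef
  have hQ2 : (2 : ℝ) ≤ Q := by rw [hQdef]; exact_mod_cast hq
  have hQ1 : (1 : ℝ) < Q := lt_of_lt_of_le one_lt_two hQ2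
  have hQ0 : (0 : ℝ) < Q := lt_trans one_pos hQ1
  have hQinv1 : Q⁻¹ < 1 := inv_lt_one_of_one_lt₀ hQ1
  have hQinv0 : (0 : ℝ) < Q⁻¹ := inv_pos.2 hQ0
  have hy0 : ∀ k : ℕ, (0 : ℝ) < Q⁻¹ ^ (k + 1) := fun k => pow_pos hQinv0 _
  have hy1 : ∀ k : ℕ, Q⁻¹ ^ (k + 1) < 1 :=
    fun k => pow_lt_one₀ hQinv0.le hQinv1 (Nat.succ_ne_zero k)
  have hQpow2 : ∀ k : ℕ, (2 : ℝ) ≤ Q ^ (k + 1) :=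
    fun k => le_trans hQ2 (le_self_pow₀ hQ1.le (Nat.succ_ne_zero k))
  have hQpow1 : ∀ k : ℕ, (1 : ℝ) < Q ^ (k + 1) :=
    fun k => lt_of_lt_of_le one_lt_two (hQpow2 k)
  -- geometric series facts
  have hgen : ∀ y : ℝ, 0 < y → y < 1 →
      Summable (fun j : ℕ => y ^ (j + 1)) ∧ ∑' j : ℕ, y ^ (j + 1) = y * (1 - y)⁻¹ := by
    intro y h0 h1
    have hs : Summable (fun j : ℕ => y ^ j) := summable_geometric_of_lt_one h0.le h1
    have he : (fun j : ℕ => y ^ (j + 1)) = fun j : ℕ => y * y ^ j := by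
      funext j; rw [pow_succ']
    constructor
    · rw [he]; exact hs.mul_left y
    · rw [he, tsum_mul_left, tsum_geometric_of_lt_one h0.le h1]
  have hsumy : ∀ k : ℕ, Summable (fun j : ℕ => (Q⁻¹ ^ (k + 1)) ^ (j + 1)) :=
    fun k => (hgen _ (hy0 k) (hy1 k)).1
  have hgeo : ∀ k : ℕ, ∑' j : ℕ, (Q⁻¹ ^ (k + 1)) ^ (j + 1) = 1 / (Q ^ (k + 1) - 1) := by
    intro k
    rw [(hgen _ (hy0 k) (hy1 k)).2]
    have hne : Q ^ (k + 1) - 1 ≠ 0 := ne_of_gt (by linarith [hQpow1 k])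
    have hQpne : Q ^ (k + 1) ≠ 0 := ne_of_gt (pow_pos hQ0 _)
    rw [inv_pow]
    field_simp
  -- per-k strict inequality on plain geometric sums
  have hkey : ∀ k : ℕ, ∑ j ∈ Finset.range r, (Q⁻¹ ^ (j + 1)) ^ (k + 1)
      < 1 / (Q ^ (k + 1) - 1) := by
    intro k
    have hswap : ∑ j ∈ Finset.range r, (Q⁻¹ ^ (j + 1)) ^ (k + 1)
        = ∑ j ∈ Finset.range r, (Q⁻¹ ^ (k + 1)) ^ (j + 1) := by
      refine Finset.sum_congr rfl fun j _ => ?_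
      rw [← pow_mul, ← pow_mul, Nat.mul_comm]
    have h1 := Summable.sum_le_tsum (Finset.range (r + 1))
      (fun j _ => (pow_pos (hy0 k) (j + 1)).le) (hsumy k)
    rw [Finset.sum_range_succ] at h1
    have h2 : (0 : ℝ) < (Q⁻¹ ^ (k + 1)) ^ (r + 1) := pow_pos (hy0 k) _
    rw [hswap]
    calc ∑ j ∈ Finset.range r, (Q⁻¹ ^ (k + 1)) ^ (j + 1)
        < ∑' j : ℕ, (Q⁻¹ ^ (k + 1)) ^ (j + 1) := by linarith
      _ = 1 / (Q ^ (k + 1) - 1) := hgeo k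
  -- log expansion
  have hlog : ∀ j : ℕ, HasSum (fun k : ℕ => (Q⁻¹ ^ (j + 1)) ^ (k + 1) / (k + 1))
      (-Real.log (1 - Q⁻¹ ^ (j + 1))) := fun j =>
    Real.hasSum_pow_div_log_of_abs_lt_one (by rw [abs_of_pos (hy0 j)]; exact hy1 j)
  have hL : ∑ j ∈ Finset.range r, (-Real.log (1 - Q⁻¹ ^ (j + 1)))
      = ∑' k : ℕ, ∑ j ∈ Finset.range r, (Q⁻¹ ^ (j + 1)) ^ (k + 1) / (k + 1) := by
    rw [Summable.tsum_finsetSum (fun j _ => (hlog j).summable)]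
    exact Finset.sum_congr rfl fun j _ => ((hlog j).tsum_eq).symm
  rw [hL]
  -- now compare termwise
  have hterm : ∀ k : ℕ, ∑ j ∈ Finset.range r, (Q⁻¹ ^ (j + 1)) ^ (k + 1) / (k + 1)
      < 1 / (((k : ℝ) + 1) * (Q ^ (k + 1) - 1)) := by
    intro k
    have hk1 : (0 : ℝ) < (k : ℝ) + 1 := by positivity
    rw [← Finset.sum_div,
      show (1 : ℝ) / (((k : ℝ) + 1) * (Q ^ (k + 1) - 1))
        = (1 / (Q ^ (k + 1) - 1)) / ((k : ℝ) + 1) by rw [div_div, mul_comm]]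
    gcongr
    exact hkey k
  have hnonneg : ∀ k : ℕ, (0 : ℝ) ≤ ∑ j ∈ Finset.range r, (Q⁻¹ ^ (j + 1)) ^ (k + 1) / (k + 1) := by
    intro k
    apply Finset.sum_nonneg
    intro j _
    positivity
  have hgsum : Summable (fun k : ℕ => 1 / (((k : ℝ) + 1) * (Q ^ (k + 1) - 1))) := by
    refine Summable.of_nonneg_of_le
      (fun k => le_of_lt (one_div_pos.2 (mul_pos (by positivity) (by linarith [hQpow1 k])))) ?_
      (summable_geometric_of_lt_one hQinv0.le hQinv1)
    intro k
    have h2 : (2 : ℝ) ≤ Q ^ (k + 1) := hQpow2 k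
    have hA : (0 : ℝ) < Q ^ (k + 1) - 1 := by linarith
    have hk1 : (1 : ℝ) ≤ (k : ℝ) + 1 := by
      have : (0:ℝ) ≤ (k:ℝ) := Nat.cast_nonneg k
      linarith
    have hstep1 : 1 / (((k : ℝ) + 1) * (Q ^ (k + 1) - 1)) ≤ 1 / (Q ^ (k + 1) - 1) := by
      apply one_div_le_one_div_of_le hA
      nlinarith
    have hstep2 : 1 / (Q ^ (k + 1) - 1) ≤ 2 / Q ^ (k + 1) := by
      rw [div_le_div_iff₀ hA (by positivity)]
      linarith
    have hstep3 : 2 / Q ^ (k + 1) ≤ Q⁻¹ ^ k := by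
      rw [div_le_iff₀ (by positivity : (0:ℝ) < Q ^ (k + 1))]
      have : Q⁻¹ ^ k * Q ^ (k + 1) = Q := by
        rw [inv_pow, pow_succ]
        field_simp
      rw [this]
      exact hQ2
    linarith
  exact Summable.tsum_lt_tsum_of_nonneg hnonneg (fun k => (hterm k).le) (hterm 0) hgsum

attribute [local instance] Fintype.ofFinite

set_option maxHeartbeats 1000000 in
/-- Lower bound on the ball volume. -/
lemma aux_lower (q m n r : ℕ) (Fq Fqm : Type) [Field Fq] [Fintype Fq] [Field Fqm] [Fintype Fqm]
    [Algebra Fq Fqm] (hq : Fintype.card Fq = q) (hm : Module.finrank Fq Fqm = m)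
    (hrn : r ≤ n) (hrm : r ≤ m) :
    q ^ (r * (m + n - r)) ≤ ballVol Fq Fqm n r := by
  classical
  haveI : Module.Finite Fq Fqm := Module.Finite.of_finite
  have hWsel : ∀ a : Fin r → Fqm, ∃ Wsub : Submodule Fq Fqm,
      Submodule.span Fq (Set.range a) ≤ Wsub ∧ Module.finrank Fq Wsub = r := by
    intro a
    apply aux_exists_ext
    · exact le_trans (finrank_range_le_card a) (by simp)
    · rw [hm]; exact hrm
  choose W hW1 hW2 using hWsel
  let T := Σ a : Fin r → Fqm, (Fin (n - r) → (W a))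
  let F : T → (Fin n → Fqm) := fun p i =>
    if h : (i : ℕ) < r then p.1 ⟨i, h⟩
    else ((p.2 ⟨(i : ℕ) - r, by have := i.isLt; omega⟩ : W p.1) : Fqm)
  have hmem : ∀ p : T, F p ∈ rankBall Fq r 0 := by
    intro p
    have hsub : Submodule.span Fq (Set.range (F p)) ≤ W p.1 := by
      rw [Submodule.span_le]
      rintro _ ⟨i, rfl⟩
      by_cases h : (i : ℕ) < r
      · simp only [F, dif_pos h]
        exact hW1 p.1 (Submodule.subset_span ⟨⟨(i : ℕ), h⟩, rfl⟩)
      · simp only [F, dif_neg h]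
        exact (p.2 _).2
    show rankWeight Fq (F p - 0) ≤ r
    rw [sub_zero]
    calc Module.finrank Fq (Submodule.span Fq (Set.range (F p)))
        ≤ Module.finrank Fq (W p.1) := Submodule.finrank_mono hsub
      _ = r := hW2 p.1
  let FF : T → (rankBall Fq r (0 : Fin n → Fqm)) := fun p => ⟨F p, hmem p⟩
  have hinj : Function.Injective FF := by
    rintro ⟨a, b⟩ ⟨a', b'⟩ h
    have hy : F ⟨a, b⟩ = F ⟨a', b'⟩ := congrArg Subtype.val h
    have ha : a = a' := by
      funext j
      have h1 := congrFun hy ⟨(j : ℕ), lt_of_lt_of_le j.isLt hrn⟩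
      simpa only [F, dif_pos j.isLt, Fin.eta] using h1
    subst ha
    have hb : b = b' := by
      funext j
      have hjn : r + (j : ℕ) < n := by have := j.isLt; omega
      have hjr : ¬ (r + (j : ℕ) < r) := by omega
      have h1 := congrFun hy ⟨r + (j : ℕ), hjn⟩
      simp only [F, dif_neg hjr, Nat.add_sub_cancel_left, Fin.eta] at h1
      exact Subtype.ext h1
    rw [hb]
  have hcardT : Nat.card T = (q ^ m) ^ r * (q ^ r) ^ (n - r) := by
    rw [Nat.card_eq_fintype_card, Fintype.card_sigma]
    have hW : ∀ a : Fin r → Fqm, Fintype.card (Fin (n - r) → (W a)) = (q ^ r) ^ (n - r) := by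
      intro a
      rw [Fintype.card_fun, Module.card_eq_pow_finrank (K := Fq) (V := ↥(W a)), hq, hW2,
        Fintype.card_fin]
    simp only [hW]
    rw [Finset.sum_const, Finset.card_univ, Fintype.card_fun,
      Module.card_eq_pow_finrank (K := Fq) (V := Fqm), hq, hm, Fintype.card_fin, smul_eq_mul]
  have hle := Nat.card_le_card_of_injective FF hinj
  rw [hcardT] at hle
  calc q ^ (r * (m + n - r)) = (q ^ m) ^ r * (q ^ r) ^ (n - r) := by
        rw [← pow_mul, ← pow_mul, ← pow_add]
        congr 1
        obtain ⟨d, rfl⟩ : ∃ d, n = r + d := ⟨n - r, by omega⟩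
        have h1 : m + (r + d) - r = m + d := by omega
        have h2 : r + d - r = d := by omega
        rw [h1, h2]; ring
    _ ≤ ballVol Fq Fqm n r := hle

set_option maxHeartbeats 1000000 in
/-- Upper bound on the ball volume (integral form). -/
lemma aux_upper (q m n r : ℕ) (Fq Fqm : Type) [Field Fq] [Fintype Fq] [Field Fqm] [Fintype Fqm]
    [Algebra Fq Fqm] (hq : Fintype.card Fq = q) (hm : Module.finrank Fq Fqm = m)
    (hrm : r ≤ m) :
    ballVol Fq Fqm n r * ∏ i ∈ Finset.range r, (q ^ r - q ^ i) ≤ q ^ (m * r + r * n) := by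
  classical
  haveI : Module.Finite Fq Fqm := Module.Finite.of_finite
  haveI : Finite (Submodule Fq Fqm) := Finite.of_injective _ SetLike.coe_injective
  -- step 1 : ballVol ≤ card S * (q^r)^n
  have hsel : ∀ y : ↥(rankBall Fq r (0 : Fin n → Fqm)), ∃ Wsub : Submodule Fq Fqm,
      Submodule.span Fq (Set.range ((y : Fin n → Fqm))) ≤ Wsub ∧
      Module.finrank Fq Wsub = r := by
    intro y
    apply aux_exists_ext
    · have h2 := y.2
      simp only [rankBall, Set.mem_setOf_eq, sub_zero] at h2
      exact h2
    · rw [hm]; exact hrm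
  choose W hW1 hW2 using hsel
  let S := {Wsub : Submodule Fq Fqm // Module.finrank Fq Wsub = r}
  let G : ↥(rankBall Fq r (0 : Fin n → Fqm)) → Σ Ws : S, (Fin n → (Ws.1)) := fun y =>
    ⟨⟨W y, hW2 y⟩, fun i => ⟨(y : Fin n → Fqm) i, hW1 y (Submodule.subset_span ⟨i, rfl⟩)⟩⟩
  have hinjG : Function.Injective G := by
    intro y y' h
    apply Subtype.ext
    funext i
    exact congrArg (fun p : (Σ Ws : S, (Fin n → (Ws.1))) => ((p.2 i : Fqm))) h
  have hcard1 : Nat.card (Σ Ws : S, (Fin n → (Ws.1))) = Nat.card S * (q ^ r) ^ n := by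
    rw [Nat.card_eq_fintype_card, Fintype.card_sigma]
    have hWs : ∀ Ws : S, Fintype.card (Fin n → (Ws.1)) = (q ^ r) ^ n := by
      intro Ws
      rw [Fintype.card_fun, Module.card_eq_pow_finrank (K := Fq) (V := ↥(Ws.1)), hq, Ws.2,
        Fintype.card_fin]
    simp only [hWs]
    rw [Finset.sum_const, Finset.card_univ, smul_eq_mul, ← Nat.card_eq_fintype_card]
  have hstep1 : ballVol Fq Fqm n r ≤ Nat.card S * (q ^ r) ^ n := by
    rw [← hcard1]
    exact Nat.card_le_card_of_injective G hinjG
  -- step 2 : card S * ∏ (q^r - q^i) ≤ (q^m)^r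
  have hsp : ∀ (Ws : S) (v : {v : Fin r → (Ws.1) // LinearIndependent Fq v}),
      Submodule.span Fq (Set.range (fun i => ((v.1 i : Fqm)))) = Ws.1 := by
    intro Ws v
    have htop : Submodule.span Fq (Set.range v.1) = ⊤ :=
      v.2.span_eq_top_of_card_eq_finrank' (by rw [Ws.2, Fintype.card_fin])
    have hre : Set.range (fun i => ((v.1 i : Fqm))) = (Ws.1).subtype '' (Set.range v.1) := by
      rw [← Set.range_comp]; rfl
    rw [hre, Submodule.span_image, htop, Submodule.map_subtype_top]
  let T2 := Σ Ws : S, {v : Fin r → (Ws.1) // LinearIndependent Fq v}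
  let H : T2 → (Fin r → Fqm) := fun p i => ((p.2.1 i : Fqm))
  have hinjH : Function.Injective H := by
    rintro ⟨⟨W1, hW1r⟩, v1⟩ ⟨⟨W2, hW2r⟩, v2⟩ h
    have h' : (fun i => ((v1.1 i : Fqm))) = (fun i => ((v2.1 i : Fqm))) := h
    have e1 : Submodule.span Fq (Set.range fun i => ((v1.1 i : Fqm))) = W1 := hsp ⟨W1, hW1r⟩ v1
    have e2 : Submodule.span Fq (Set.range fun i => ((v2.1 i : Fqm))) = W2 := hsp ⟨W2, hW2r⟩ v2
    have hW12 : W1 = W2 := by rw [← e1, ← e2, h']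
    subst hW12
    have hv : v1 = v2 := Subtype.ext (funext fun i => Subtype.ext (congrFun h' i))
    rw [hv]
  have hcard2 : Nat.card T2 = Nat.card S * ∏ i ∈ Finset.range r, (q ^ r - q ^ i) := by
    rw [Nat.card_eq_fintype_card, Fintype.card_sigma]
    have hWs : ∀ Ws : S, Fintype.card {v : Fin r → (Ws.1) // LinearIndependent Fq v}
        = ∏ i ∈ Finset.range r, (q ^ r - q ^ i) := by
      intro Ws
      rw [← Nat.card_eq_fintype_card,
        card_linearIndependent (by rw [Ws.2] : r ≤ Module.finrank Fq (Ws.1)), hq, Ws.2,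
        ← Fin.prod_univ_eq_prod_range]
    simp only [hWs]
    rw [Finset.sum_const, Finset.card_univ, smul_eq_mul, ← Nat.card_eq_fintype_card]
  have hstep2 : Nat.card S * ∏ i ∈ Finset.range r, (q ^ r - q ^ i) ≤ (q ^ m) ^ r := by
    rw [← hcard2]
    have := Nat.card_le_card_of_injective H hinjH
    rwa [Nat.card_eq_fintype_card (α := Fin r → Fqm), Fintype.card_fun,
      Module.card_eq_pow_finrank (K := Fq) (V := Fqm), hq, hm, Fintype.card_fin] at this
  -- combine
  calc ballVol Fq Fqm n r * ∏ i ∈ Finset.range r, (q ^ r - q ^ i)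
      ≤ (Nat.card S * (q ^ r) ^ n) * ∏ i ∈ Finset.range r, (q ^ r - q ^ i) :=
        Nat.mul_le_mul_right _ hstep1
    _ = (Nat.card S * ∏ i ∈ Finset.range r, (q ^ r - q ^ i)) * (q ^ r) ^ n := by ring
    _ ≤ (q ^ m) ^ r * (q ^ r) ^ n := Nat.mul_le_mul_right _ hstep2
    _ = q ^ (m * r + r * n) := by rw [← pow_mul, ← pow_mul, ← pow_add]

set_option maxHeartbeats 1000000 in
/-- Bounds on the volume of a ball of rank radius `r`:
`q^{r(m+n-r)} ≤ V_r(q^m,n) < q^{r(m+n-r)+σ(q)}`. -/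
theorem stmt3 (q m n r : ℕ) (Fq Fqm : Type) [Field Fq] [Fintype Fq] [Field Fqm] [Fintype Fqm]
    [Algebra Fq Fqm] (hq : Fintype.card Fq = q) (hm : Module.finrank Fq Fqm = m)
    (hr : r ≤ min n m) :
    q ^ (r * (m + n - r)) ≤ ballVol Fq Fqm n r ∧
    (ballVol Fq Fqm n r : ℝ) < (q : ℝ) ^ (((r * (m + n - r) : ℕ) : ℝ) + sigmaQ q) := by
  have hrn : r ≤ n := le_trans hr (min_le_left _ _)
  have hrm : r ≤ m := le_trans hr (min_le_right _ _)
  have hq2 : 2 ≤ q := hq ▸ Fintype.one_lt_card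
  have hlow := aux_lower q m n r Fq Fqm hq hm hrn hrm
  refine ⟨hlow, ?_⟩
  have hup := aux_upper q m n r Fq Fqm hq hm hrm
  set N : ℕ := ∏ i ∈ Finset.range r, (q ^ r - q ^ i) with hNdef
  set Q : ℝ := (q : ℝ) with hQdef
  have hQ2 : (2 : ℝ) ≤ Q := by rw [hQdef]; exact_mod_cast hq2
  have hQ1 : (1 : ℝ) < Q := lt_of_lt_of_le one_lt_two hQ2
  have hQ0 : (0 : ℝ) < Q := lt_trans one_pos hQ1
  have hQinv1 : Q⁻¹ < 1 := inv_lt_one_of_one_lt₀ hQ1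
  have hQinv0 : (0 : ℝ) < Q⁻¹ := inv_pos.2 hQ0
  have hy1 : ∀ j : ℕ, Q⁻¹ ^ (j + 1) < 1 :=
    fun j => pow_lt_one₀ hQinv0.le hQinv1 (Nat.succ_ne_zero j)
  set Ssum : ℝ := ∑' k : ℕ, 1 / (((k : ℝ) + 1) * (Q ^ (k + 1) - 1)) with hSdef
  set P : ℝ := ∏ j ∈ Finset.range r, (1 - Q⁻¹ ^ (j + 1)) with hPdef
  -- positivity facts
  have hNb0 : 0 < ballVol Fq Fqm n r :=
    lt_of_lt_of_le (Nat.pow_pos (by omega)) hlow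
  have hNbR : (0 : ℝ) < (ballVol Fq Fqm n r : ℝ) := by exact_mod_cast hNb0
  have hPpos : (0 : ℝ) < P := by
    rw [hPdef]
    exact Finset.prod_pos fun j _ => by linarith [hy1 j]
  -- cast of N
  have hNcast : (N : ℝ) = ∏ i ∈ Finset.range r, (Q ^ r - Q ^ i) := by
    rw [hNdef, Nat.cast_prod]
    refine Finset.prod_congr rfl fun i hi => ?_
    have hle : q ^ i ≤ q ^ r := Nat.pow_le_pow_right (by omega) (Finset.mem_range.mp hi).le
    rw [Nat.cast_sub hle]
    push_cast
    rw [hQdef]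
  -- N = Q^(r*r) * P
  have hNP : (N : ℝ) = Q ^ (r * r) * P := by
    rw [hNcast]
    have h1 : ∀ i ∈ Finset.range r, Q ^ r - Q ^ i = Q ^ r * (1 - Q⁻¹ ^ (r - i)) := by
      intro i hi
      have hir : i ≤ r := (Finset.mem_range.mp hi).le
      have hQi : Q ^ i * Q ^ (r - i) = Q ^ r := by rw [← pow_add]; congr 1; omega
      have hQpne : Q ^ (r - i) ≠ 0 := ne_of_gt (pow_pos hQ0 _)
      have h2 : Q ^ r * (Q ^ (r - i))⁻¹ = Q ^ i := by
        rw [← hQi, mul_inv_cancel_right₀ hQpne]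
      rw [mul_sub, mul_one, inv_pow, h2]
    rw [Finset.prod_congr rfl h1, Finset.prod_mul_distrib, Finset.prod_const,
      Finset.card_range, ← pow_mul]
    congr 1
    rw [hPdef, ← Finset.prod_range_reflect (fun j => 1 - Q⁻¹ ^ (j + 1)) r]
    refine Finset.prod_congr rfl fun i hi => ?_
    have hir := Finset.mem_range.mp hi
    have he : r - 1 - i + 1 = r - i := by omega
    rw [he]
  -- exp(-Ssum) < P
  have hPgt : Real.exp (-Ssum) < P := by
    have hlogP : Real.log P = ∑ j ∈ Finset.range r, Real.log (1 - Q⁻¹ ^ (j + 1)) := by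
      rw [hPdef]
      exact Real.log_prod fun j _ => ne_of_gt (by linarith [hy1 j])
    have h4 := aux_sum_log_lt q hq2 r
    rw [← hQdef, ← hSdef] at h4
    have h5 : -Real.log P < Ssum := by
      rw [hlogP]
      calc -∑ j ∈ Finset.range r, Real.log (1 - Q⁻¹ ^ (j + 1))
          = ∑ j ∈ Finset.range r, (-Real.log (1 - Q⁻¹ ^ (j + 1))) := by
            rw [Finset.sum_neg_distrib]
        _ < Ssum := h4
    calc Real.exp (-Ssum) < Real.exp (Real.log P) := Real.exp_lt_exp.2 (by linarith)
      _ = P := Real.exp_log hPpos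
  -- rewrite the rpow target
  have hlogQ : (0 : ℝ) < Real.log Q := Real.log_pos hQ1
  have hsig : sigmaQ q = 1 / Real.log Q * Ssum := by
    rw [sigmaQ, ← hQdef, ← hSdef]
  have hrpow : Q ^ (((r * (m + n - r) : ℕ) : ℝ) + sigmaQ q)
      = Q ^ (r * (m + n - r)) * Real.exp Ssum := by
    rw [Real.rpow_add hQ0, Real.rpow_natCast, hsig, Real.rpow_def_of_pos hQ0]
    congr 1
    field_simp
  rw [hrpow]
  -- cast the integral upper bound
  have hupR : (ballVol Fq Fqm n r : ℝ) * (N : ℝ) ≤ Q ^ (m * r + r * n) := by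
    rw [hQdef]
    exact_mod_cast hup
  -- exponent bookkeeping
  have hkey : Q ^ (m * r + r * n) = Q ^ (r * (m + n - r)) * Q ^ (r * r) := by
    rw [← pow_add]
    congr 1
    obtain ⟨d, rfl⟩ : ∃ d, n = r + d := ⟨n - r, by omega⟩
    have h6 : m + (r + d) - r = m + d := by omega
    rw [h6]; ring
  -- final chain
  have hden : (0 : ℝ) < Q ^ (r * r) * Real.exp (-Ssum) := by positivity
  have hchain : (ballVol Fq Fqm n r : ℝ) * (Q ^ (r * r) * Real.exp (-Ssum))
      < Q ^ (r * (m + n - r)) * Q ^ (r * r) := by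
    calc (ballVol Fq Fqm n r : ℝ) * (Q ^ (r * r) * Real.exp (-Ssum))
        < (ballVol Fq Fqm n r : ℝ) * (N : ℝ) := by
          apply mul_lt_mul_of_pos_left _ hNbR
          rw [hNP]
          exact mul_lt_mul_of_pos_left hPgt (by positivity)
      _ ≤ Q ^ (m * r + r * n) := hupR
      _ = Q ^ (r * (m + n - r)) * Q ^ (r * r) := hkey
  have hfin := (lt_div_iff₀ hden).2 hchain
  calc (ballVol Fq Fqm n r : ℝ)
      < (Q ^ (r * (m + n - r)) * Q ^ (r * r)) / (Q ^ (r * r) * Real.exp (-Ssum)) := hfin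
    _ = Q ^ (r * (m + n - r)) * Real.exp Ssum := by
        rw [Real.exp_neg]
        have hQrr : Q ^ (r * r) ≠ 0 := ne_of_gt (pow_pos hQ0 _)
        have hexp : Real.exp Ssum ≠ 0 := Real.exp_ne_zero _
        field_simp

end
end

section
/- For 3 ≤ n ≤ m and 2 ≤ 2r < n, there exists a set S ⊆ GF(q^m)^n of diameter 2r (i.e., d_R(x,y) ≤ 2r for all x,y ∈ S) such that |S| > V_r(q^m,n). In fact S = {x ∈ GF(q^m)^n : x_{2r} = ⋯ = x_{n−1} = 0} has diameter 2r and cardinality q^{2mr} > V_r(q^m,n). -/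
open scoped BigOperators

noncomputable section

section Aux

variable {Fq Fqm : Type} [Field Fq] [Fintype Fq] [Field Fqm] [Fintype Fqm] [Algebra Fq Fqm]

/-- Any vector supported on the first `k` coordinates has rank weight at most `k`. -/
lemma rankWeight_le_of_support (k n : ℕ) (hkn : k ≤ n) (z : Fin n → Fqm)
    (hz : ∀ i : Fin n, k ≤ (i : ℕ) → z i = 0) : rankWeight Fq z ≤ k := by
  haveI : FiniteDimensional Fq Fqm := Module.Finite.of_basis (Module.finBasis Fq Fqm)
  set w : Fin k → Fqm := fun j => z (Fin.castLE hkn j) with hw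
  have hsub : Set.range z ⊆ insert 0 (Set.range w) := by
    rintro _ ⟨i, rfl⟩
    by_cases h : (i : ℕ) < k
    · right
      exact ⟨⟨i, h⟩, by simp [hw, Fin.ext_iff]⟩
    · left
      exact hz i (le_of_not_gt h)
  have h1 : rankWeight Fq z ≤ Module.finrank Fq (Submodule.span Fq (Set.range w)) := by
    have : Submodule.span Fq (Set.range z) ≤ Submodule.span Fq (Set.range w) := by
      have h0 := Submodule.span_mono (R := Fq) hsub
      rwa [Submodule.span_insert_zero] at h0
    exact Submodule.finrank_mono this
  calc rankWeight Fq z ≤ Module.finrank Fq (Submodule.span Fq (Set.range w)) := h1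
    _ ≤ Fintype.card (Fin k) := finrank_range_le_card w
    _ = k := Fintype.card_fin k

/-- Every vector of rank weight at most `r` is a combination `∑ β_j • y_j` with
`β_j ∈ Fqm` and `y_j` having coordinates in `Fq`. -/
lemma mem_range_comb {n r : ℕ} (x : Fin n → Fqm) (hx : rankWeight Fq x ≤ r) :
    ∃ p : (Fin r → Fqm) × (Fin r → Fin n → Fq),
      (fun i => ∑ j, p.1 j * algebraMap Fq Fqm (p.2 j i)) = x := by
  haveI : FiniteDimensional Fq Fqm := Module.Finite.of_basis (Module.finBasis Fq Fqm)
  set W := Submodule.span Fq (Set.range x) with hW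
  set d := Module.finrank Fq W with hdd
  have hd : d ≤ r := hx
  let b : Module.Basis (Fin d) Fq W := Module.finBasis Fq W
  have hxi : ∀ i, x i ∈ W := fun i => Submodule.subset_span ⟨i, rfl⟩
  set c : Fin n → (Fin d →₀ Fq) := fun i => b.repr ⟨x i, hxi i⟩ with hc
  refine ⟨⟨fun j => if h : (j : ℕ) < d then (b ⟨j, h⟩ : Fqm) else 0,
    fun j i => if h : (j : ℕ) < d then c i ⟨j, h⟩ else 0⟩, ?_⟩
  funext i
  set g : Fin d → Fqm := fun j => (b j : Fqm) * algebraMap Fq Fqm (c i j) with hg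
  have hterm : ∀ j : Fin r,
      (if h : (j : ℕ) < d then (b ⟨j, h⟩ : Fqm) else 0) *
        algebraMap Fq Fqm (if h : (j : ℕ) < d then c i ⟨j, h⟩ else 0)
      = (fun k : ℕ => if h : k < d then g ⟨k, h⟩ else 0) (j : ℕ) := by
    intro j
    by_cases h : (j : ℕ) < d
    · simp [h, hg]
    · simp [h]
  have hsum : (∑ j : Fin r,
      (if h : (j : ℕ) < d then (b ⟨j, h⟩ : Fqm) else 0) *
        algebraMap Fq Fqm (if h : (j : ℕ) < d then c i ⟨j, h⟩ else 0)) = ∑ j : Fin d, g j := by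
    rw [Finset.sum_congr rfl fun j _ => hterm j]
    rw [Fin.sum_univ_eq_sum_range (fun k : ℕ => if h : k < d then g ⟨k, h⟩ else 0) r]
    rw [← Finset.sum_subset (Finset.range_subset_range.2 hd)
      (fun k _ hk => by rw [dif_neg (by simpa using hk)])]
    rw [← Fin.sum_univ_eq_sum_range (fun k : ℕ => if h : k < d then g ⟨k, h⟩ else 0) d]
    exact Finset.sum_congr rfl fun j _ => by rw [dif_pos j.isLt]
  have hrepr : ∑ j : Fin d, g j = x i := by
    have h1 : ∀ j : Fin d, g j = ((c i j • b j : W) : Fqm) := by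
      intro j
      rw [hg]
      simp [Algebra.smul_def, mul_comm]
    rw [Finset.sum_congr rfl fun j _ => h1 j, ← Submodule.coe_sum]
    have h2 : (∑ j : Fin d, c i j • b j) = (⟨x i, hxi i⟩ : W) := b.sum_repr ⟨x i, hxi i⟩
    rw [h2]
  simpa using hsum.trans hrepr

end Aux

/-- Balls with rank radii do not maximize the cardinality of a set of a given diameter:
for `3 ≤ n ≤ m` and `2 ≤ 2r < n` there is a set of diameter `2r` and cardinality
`q^{2mr} > V_r(q^m,n)`. -/
theorem stmt4 (q m n r : ℕ) (Fq Fqm : Type) [Field Fq] [Fintype Fq] [Field Fqm] [Fintype Fqm]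
    [Algebra Fq Fqm] (hq : Fintype.card Fq = q) (hm : Module.finrank Fq Fqm = m)
    (hn : 3 ≤ n) (hnm : n ≤ m) (hr1 : 1 ≤ r) (hr2 : 2 * r < n) :
    ∃ S : Set (Fin n → Fqm),
      (∀ x ∈ S, ∀ y ∈ S, rankWeight Fq (x - y) ≤ 2 * r) ∧
      Nat.card ↥S = q ^ (2 * m * r) ∧
      ballVol Fq Fqm n r < Nat.card ↥S := by
  classical
  haveI : FiniteDimensional Fq Fqm := Module.Finite.of_basis (Module.finBasis Fq Fqm)
  have h2rn : 2 * r ≤ n := le_of_lt hr2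
  have hcardFqm : Fintype.card Fqm = q ^ m := by
    rw [← hq, ← hm]; exact Module.card_eq_pow_finrank
  have hq2 : 1 < q := hq ▸ Fintype.one_lt_card
  set S : Set (Fin n → Fqm) := {x | ∀ i : Fin n, 2 * r ≤ (i : ℕ) → x i = 0} with hS
  -- cardinality of S
  have e : S ≃ (Fin (2 * r) → Fqm) :=
    { toFun := fun x j => x.1 (Fin.castLE h2rn j)
      invFun := fun g => ⟨fun i => if h : (i : ℕ) < 2 * r then g ⟨i, h⟩ else 0,
        fun i hi => dif_neg (not_lt.2 hi)⟩
      left_inv := by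
        rintro ⟨x, hx⟩
        apply Subtype.ext
        funext i
        by_cases h : (i : ℕ) < 2 * r
        · simp only [dif_pos h]
          exact congrArg x (Fin.ext rfl)
        · simp only [dif_neg h]
          exact (hx i (not_lt.1 h)).symm
      right_inv := by
        intro g
        funext j
        simp only [Fin.coe_castLE, dif_pos j.isLt] }
  have hcardS : Nat.card ↥S = q ^ (2 * m * r) := by
    rw [Nat.card_congr e, Nat.card_eq_fintype_card, Fintype.card_fun, hcardFqm,
      Fintype.card_fin, ← pow_mul]
    ring_nf
  refine ⟨S, ?_, hcardS, ?_⟩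
  · intro x hx y hy
    refine rankWeight_le_of_support (2 * r) n h2rn _ (fun i hi => ?_)
    rw [Pi.sub_apply, hx i hi, hy i hi, sub_zero]
  · -- volume bound
    rw [hcardS]
    set f : (Fin r → Fqm) × (Fin r → Fin n → Fq) → (Fin n → Fqm) :=
      fun p i => ∑ j, p.1 j * algebraMap Fq Fqm (p.2 j i) with hf
    have hball : rankBall Fq r (0 : Fin n → Fqm) ⊆ Set.range f := by
      intro x hx
      have hx' : rankWeight Fq x ≤ r := by
        have : rankWeight Fq (x - 0) ≤ r := hx
        rwa [sub_zero] at this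
      obtain ⟨p, hp⟩ := mem_range_comb x hx'
      exact ⟨p, hp⟩
    have hn0 : 0 < n := by omega
    have hr0 : 0 < r := hr1
    have hninj : ¬ Function.Injective f := by
      intro hinj
      have h01 : f (0, fun _ _ => 1) = f (0, fun _ _ => 0) := by
        funext i; simp [hf]
      have h2 := hinj h01
      have h3 : (1 : Fq) = 0 := by
        have h4 := congrArg (fun p : (Fin r → Fqm) × (Fin r → Fin n → Fq) =>
          p.2 ⟨0, hr0⟩ ⟨0, hn0⟩) h2
        simpa using h4
      exact one_ne_zero h3
    have hlt1 : Nat.card ↥(Set.range f) <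
        Nat.card ((Fin r → Fqm) × (Fin r → Fin n → Fq)) := by
      rw [Nat.card_eq_fintype_card, Nat.card_eq_fintype_card]
      refine Fintype.card_lt_of_surjective_not_injective (Set.rangeFactorization f)
        Set.rangeFactorization_surjective ?_
      intro hinj
      exact hninj fun a b h => hinj (Subtype.ext h)
    have hcarddom : Nat.card ((Fin r → Fqm) × (Fin r → Fin n → Fq)) ≤ q ^ (2 * m * r) := by
      simp only [Nat.card_eq_fintype_card, Fintype.card_prod, Fintype.card_fun,
        Fintype.card_fin, hcardFqm, hq]
      rw [← pow_mul, ← pow_mul, ← pow_add]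
      exact Nat.pow_le_pow_right (by omega) (by nlinarith)
    calc ballVol Fq Fqm n r ≤ Nat.card ↥(Set.range f) :=
          Nat.card_mono (Set.toFinite _) hball
      _ < Nat.card ((Fin r → Fqm) × (Fin r → Fin n → Fq)) := hlt1
      _ ≤ q ^ (2 * m * r) := hcarddom

end
end

section
/- For 0 ≤ r,s ≤ n, the cardinality |B_r(c₁) ∩ B_s(c₂)| depends on c₁, c₂ ∈ GF(q^m)^n only through their rank distance: if c₁,c₂,c₁',c₂' ∈ GF(q^m)^n satisfy d_R(c₁,c₂) = d_R(c₁',c₂'), then |B_r(c₁) ∩ B_s(c₂)| = |B_r(c₁') ∩ B_s(c₂')|. -/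
open scoped BigOperators

noncomputable section

section AuxConj

open Module Submodule LinearMap

/-- Two linear maps between finite-dimensional spaces with equal rank are equivalent. -/
lemma exists_conj_of_rank_eq {K A B : Type*} [Field K] [AddCommGroup A] [Module K A]
    [AddCommGroup B] [Module K B] [FiniteDimensional K A] [FiniteDimensional K B]
    (f f' : A →ₗ[K] B)
    (h : finrank K (LinearMap.range f) = finrank K (LinearMap.range f')) :
    ∃ (g : A ≃ₗ[K] A) (e : B ≃ₗ[K] B), ∀ a, e (f (g a)) = f' a := by
  obtain ⟨C, hC⟩ := Submodule.exists_isCompl (LinearMap.ker f)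
  obtain ⟨C', hC'⟩ := Submodule.exists_isCompl (LinearMap.ker f')
  obtain ⟨D, hD⟩ := Submodule.exists_isCompl (LinearMap.range f)
  obtain ⟨D', hD'⟩ := Submodule.exists_isCompl (LinearMap.range f')
  let fC : C ≃ₗ[K] LinearMap.range f :=
    (Submodule.quotientEquivOfIsCompl _ _ hC).symm.trans f.quotKerEquivRange
  let fC' : C' ≃ₗ[K] LinearMap.range f' :=
    (Submodule.quotientEquivOfIsCompl _ _ hC').symm.trans f'.quotKerEquivRange
  have hfC : ∀ c : C, (fC c : B) = f c := fun c => by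
    simp only [fC, LinearEquiv.trans_apply, Submodule.quotientEquivOfIsCompl_symm_apply,
      LinearMap.quotKerEquivRange_apply_mk]
  have hfC' : ∀ c : C', (fC' c : B) = f' c := fun c => by
    simp only [fC', LinearEquiv.trans_apply, Submodule.quotientEquivOfIsCompl_symm_apply,
      LinearMap.quotKerEquivRange_apply_mk]
  have h1 : finrank K (LinearMap.ker f) + finrank K C = finrank K A :=
    Submodule.finrank_add_eq_of_isCompl hC
  have h1' : finrank K (LinearMap.ker f') + finrank K C' = finrank K A :=
    Submodule.finrank_add_eq_of_isCompl hC'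
  have h2 : finrank K (LinearMap.range f) + finrank K D = finrank K B :=
    Submodule.finrank_add_eq_of_isCompl hD
  have h2' : finrank K (LinearMap.range f') + finrank K D' = finrank K B :=
    Submodule.finrank_add_eq_of_isCompl hD'
  have hcc : finrank K C = finrank K (LinearMap.range f) := fC.finrank_eq
  have hcc' : finrank K C' = finrank K (LinearMap.range f') := fC'.finrank_eq
  have kerEquiv : (LinearMap.ker f') ≃ₗ[K] (LinearMap.ker f) :=
    LinearEquiv.ofFinrankEq _ _ (by omega)
  have cEquiv : C' ≃ₗ[K] C := LinearEquiv.ofFinrankEq _ _ (by omega)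
  have dEquiv : D ≃ₗ[K] D' := LinearEquiv.ofFinrankEq _ _ (by omega)
  let rEquiv : (LinearMap.range f) ≃ₗ[K] (LinearMap.range f') :=
    fC.symm.trans (cEquiv.symm.trans fC')
  let g : A ≃ₗ[K] A :=
    (Submodule.prodEquivOfIsCompl _ _ hC').symm.trans
      ((kerEquiv.prodCongr cEquiv).trans (Submodule.prodEquivOfIsCompl _ _ hC))
  let e : B ≃ₗ[K] B :=
    (Submodule.prodEquivOfIsCompl _ _ hD).symm.trans
      ((rEquiv.prodCongr dEquiv).trans (Submodule.prodEquivOfIsCompl _ _ hD'))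
  have he : ∀ v : LinearMap.range f, e (v : B) = (rEquiv v : B) := fun v => by
    simp only [e, LinearEquiv.trans_apply, Submodule.prodEquivOfIsCompl_symm_apply_left,
      LinearEquiv.prodCongr_apply, Submodule.coe_prodEquivOfIsCompl', map_zero]
    simp
  refine ⟨g, e, fun a => ?_⟩
  set p := (Submodule.prodEquivOfIsCompl _ _ hC').symm a with hp
  have ha : ((p.1 : A) + (p.2 : A)) = a := by
    have := (Submodule.prodEquivOfIsCompl _ _ hC').apply_symm_apply a
    rwa [Submodule.coe_prodEquivOfIsCompl'] at this
  have hga : g a = (kerEquiv p.1 : A) + (cEquiv p.2 : A) := by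
    simp only [g, LinearEquiv.trans_apply, ← hp, LinearEquiv.prodCongr_apply,
      Submodule.coe_prodEquivOfIsCompl']
  have hfga : f (g a) = (fC (cEquiv p.2) : B) := by
    rw [hga, map_add, hfC]
    have : f ((kerEquiv p.1 : A)) = 0 := (kerEquiv p.1).2
    rw [this, zero_add]
  have hr : rEquiv (fC (cEquiv p.2)) = fC' p.2 := by
    simp only [rEquiv, LinearEquiv.trans_apply, LinearEquiv.symm_apply_apply]
  rw [hfga, he, hr, hfC']
  conv_rhs => rw [← ha]
  have : f' ((p.1 : A)) = 0 := p.1.2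
  rw [map_add, this, zero_add]

end AuxConj

section AuxRank

open Module Submodule LinearMap

variable (Fq : Type) {Fqm : Type} [Field Fq] [Field Fqm] [Algebra Fq Fqm]
  [FiniteDimensional Fq Fqm] {n : ℕ}

/-- The canonical equivalence between vectors and linear maps `Fq^n →ₗ Fqm`. -/
noncomputable def vecHom : (Fin n → Fqm) ≃ₗ[Fq] ((Fin n → Fq) →ₗ[Fq] Fqm) :=
  (Pi.basisFun Fq (Fin n)).constr Fq

lemma rankWeight_eq_finrank_range (y : Fin n → Fqm) :
    rankWeight Fq y = finrank Fq (LinearMap.range (vecHom Fq y)) := by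
  rw [rankWeight, vecHom, Basis.constr_range]

/-- Given vectors of equal rank weight, there is a linear automorphism of `Fqm^n`
preserving rank weight and taking one to the other. -/
lemma exists_rank_preserving_equiv (d d' : Fin n → Fqm)
    (h : rankWeight Fq d = rankWeight Fq d') :
    ∃ φ : (Fin n → Fqm) ≃ₗ[Fq] (Fin n → Fqm),
      (∀ y, rankWeight Fq (φ y) = rankWeight Fq y) ∧ φ d = d' := by
  obtain ⟨g, e, hge⟩ := exists_conj_of_rank_eq (vecHom Fq d) (vecHom Fq d')
    (by rw [← rankWeight_eq_finrank_range, ← rankWeight_eq_finrank_range, h])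
  let φ : (Fin n → Fqm) ≃ₗ[Fq] (Fin n → Fqm) :=
    (vecHom Fq).trans ((LinearEquiv.arrowCongr g.symm e).trans (vecHom Fq).symm)
  have key : ∀ y, vecHom Fq (φ y) = e.toLinearMap ∘ₗ (vecHom Fq y ∘ₗ g.toLinearMap) := by
    intro y
    simp only [φ, LinearEquiv.trans_apply, LinearEquiv.apply_symm_apply]
    ext a
    simp [LinearEquiv.arrowCongr_apply]
  refine ⟨φ, fun y => ?_, ?_⟩
  · rw [rankWeight_eq_finrank_range, rankWeight_eq_finrank_range, key,
      LinearMap.range_comp, LinearMap.range_comp_of_range_eq_top _ g.range,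
      LinearEquiv.finrank_map_eq]
  · have : vecHom Fq (φ d) = vecHom Fq d' := by
      rw [key]
      exact LinearMap.ext fun a => hge a
    exact (vecHom Fq).injective this

lemma card_inter_rankBall_of_rankWeight_eq (r s : ℕ) (d d' : Fin n → Fqm)
    (h : rankWeight Fq d = rankWeight Fq d') :
    Nat.card ↥(rankBall Fq r d ∩ rankBall Fq s 0)
      = Nat.card ↥(rankBall Fq r d' ∩ rankBall Fq s 0) := by
  obtain ⟨φ, hφ, hd⟩ := exists_rank_preserving_equiv Fq d d' h
  have himg : (⇑φ) '' (rankBall Fq r d ∩ rankBall Fq s 0)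
      = rankBall Fq r d' ∩ rankBall Fq s 0 := by
    ext z
    constructor
    · rintro ⟨y, ⟨h1, h2⟩, rfl⟩
      constructor
      · show rankWeight Fq (φ y - d') ≤ r
        rw [← hd, ← map_sub, hφ]
        exact h1
      · show rankWeight Fq (φ y - 0) ≤ s
        rw [sub_zero, hφ]
        simpa [rankBall, sub_zero] using h2
    · rintro ⟨h1, h2⟩
      refine ⟨φ.symm z, ⟨?_, ?_⟩, φ.apply_symm_apply z⟩
      · show rankWeight Fq (φ.symm z - d) ≤ r
        have : rankWeight Fq (φ (φ.symm z - d)) ≤ r := by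
          rw [map_sub, φ.apply_symm_apply, hd]
          exact h1
        rwa [hφ] at this
      · show rankWeight Fq (φ.symm z - 0) ≤ s
        have : rankWeight Fq (φ (φ.symm z - 0)) ≤ s := by
          rw [map_sub, φ.apply_symm_apply, map_zero]
          exact h2
        rwa [hφ] at this
  rw [← himg, Nat.card_image_of_injective φ.injective]

lemma card_inter_rankBall_translate (r s : ℕ) (c₁ c₂ : Fin n → Fqm) :
    Nat.card ↥(rankBall Fq r c₁ ∩ rankBall Fq s c₂)
      = Nat.card ↥(rankBall Fq r (c₁ - c₂) ∩ rankBall Fq s 0) := by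
  have himg : (fun y => y - c₂) '' (rankBall Fq r c₁ ∩ rankBall Fq s c₂)
      = rankBall Fq r (c₁ - c₂) ∩ rankBall Fq s 0 := by
    ext z
    constructor
    · rintro ⟨y, ⟨h1, h2⟩, rfl⟩
      constructor
      · show rankWeight Fq (y - c₂ - (c₁ - c₂)) ≤ r
        have : y - c₂ - (c₁ - c₂) = y - c₁ := by abel
        rw [this]; exact h1
      · show rankWeight Fq (y - c₂ - 0) ≤ s
        rw [sub_zero]; exact h2
    · rintro ⟨h1, h2⟩
      refine ⟨z + c₂, ⟨?_, ?_⟩, by simp⟩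
      · show rankWeight Fq (z + c₂ - c₁) ≤ r
        have : z + c₂ - c₁ = z - (c₁ - c₂) := by abel
        rw [this]; exact h1
      · show rankWeight Fq (z + c₂ - c₂) ≤ s
        have : z + c₂ - c₂ = z - 0 := by abel
        rw [this]; exact h2
  have hinj : Function.Injective (fun y : Fin n → Fqm => y - c₂) :=
    fun a b hab => by simpa using sub_left_injective hab
  rw [← himg, Nat.card_image_of_injective hinj]

end AuxRank

/-- The cardinality of the intersection of two balls with rank radii depends on the centers
only through their rank distance. -/
theorem stmt5 (q m n r s : ℕ) (Fq Fqm : Type) [Field Fq] [Fintype Fq] [Field Fqm] [Fintype Fqm]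
    [Algebra Fq Fqm] (hq : Fintype.card Fq = q) (hm : Module.finrank Fq Fqm = m)
    (hr : r ≤ n) (hs : s ≤ n)
    (c₁ c₂ c₁' c₂' : Fin n → Fqm)
    (h : rankWeight Fq (c₁ - c₂) = rankWeight Fq (c₁' - c₂')) :
    Nat.card ↥(rankBall Fq r c₁ ∩ rankBall Fq s c₂)
      = Nat.card ↥(rankBall Fq r c₁' ∩ rankBall Fq s c₂') := by
  have : FiniteDimensional Fq Fqm := Module.Finite.of_finite
  rw [card_inter_rankBall_translate Fq r s c₁ c₂,
    card_inter_rankBall_translate Fq r s c₁' c₂']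
  exact card_inter_rankBall_of_rankWeight_eq Fq r s _ _ h

end
end

section
/- For 0 ≤ r,s ≤ n and c₁, c₂, c₁', c₂' ∈ GF(q^m)^n with d_R(c₁,c₂) > d_R(c₁',c₂'), one has |B_r(c₁) ∩ B_s(c₂)| ≤ |B_r(c₁') ∩ B_s(c₂')|. -/
open scoped BigOperators

noncomputable section

section Aux

open Module Submodule LinearMap

variable {K : Type*} [Field K] {V W : Type*} [AddCommGroup V] [Module K V]
  [AddCommGroup W] [Module K W]

def interT (K : Type*) [Field K] {V W : Type*} [AddCommGroup V] [Module K V]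
    [AddCommGroup W] [Module K W] (r s : ℕ) (C : V →ₗ[K] W) : Set (V →ₗ[K] W) :=
  {Y | finrank K (LinearMap.range (Y - C)) ≤ r ∧ finrank K (LinearMap.range Y) ≤ s}

lemma range_add_smulRight (b : V →ₗ[K] K) (u : V) (hbu : b u = 1)
    (Z : V →ₗ[K] W) (hZ : Z u = 0) (β : W) :
    LinearMap.range (Z + b.smulRight β) = LinearMap.range Z ⊔ span K {β} := by
  have hβ : β ∈ LinearMap.range (Z + b.smulRight β) := by
    refine ⟨u, ?_⟩
    simp [hZ, hbu]
  apply le_antisymm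
  · rintro _ ⟨v, rfl⟩
    have : (Z + b.smulRight β) v = Z v + b v • β := rfl
    rw [this]
    exact add_mem (le_sup_left (α := Submodule K W) (LinearMap.mem_range_self Z v))
      (le_sup_right (α := Submodule K W) (smul_mem _ _ (mem_span_singleton_self β)))
  · refine sup_le ?_ ?_
    · rintro _ ⟨v, rfl⟩
      have : Z v = (Z + b.smulRight β) v - b v • β := by
        simp [LinearMap.add_apply]
      rw [this]
      exact sub_mem (LinearMap.mem_range_self _ v) (smul_mem _ _ hβ)
    · rw [span_le, Set.singleton_subset_iff]
      exact hβ

variable [FiniteDimensional K W]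

lemma finrank_sup_span_singleton_le (U : Submodule K W) (x : W) :
    finrank K ↥(U ⊔ span K {x}) ≤ finrank K ↥U + 1 := by
  have h := Submodule.finrank_sup_add_finrank_inf_eq U (span K {x})
  have hx : finrank K ↥(span K {x}) ≤ 1 := by
    by_cases hx0 : x = 0
    · rw [hx0, span_zero_singleton]; simp
    · rw [finrank_span_singleton hx0]
  omega

lemma sub_mem_dimset {U : Submodule K W} {t : ℕ} {β γ : W}
    (hβ : finrank K ↥(U ⊔ span K {β}) ≤ t) (hγ : finrank K ↥(U ⊔ span K {γ}) ≤ t) :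
    finrank K ↥(U ⊔ span K {β - γ}) ≤ t := by
  by_cases hγU : γ ∈ U
  · refine le_trans (Submodule.finrank_mono ?_) hβ
    refine sup_le le_sup_left ?_
    rw [span_le, Set.singleton_subset_iff]
    exact sub_mem (le_sup_right (α := Submodule K W) (mem_span_singleton_self β))
      (le_sup_left (α := Submodule K W) hγU)
  · have hlt : finrank K ↥U < finrank K ↥(U ⊔ span K {γ}) := by
      apply Submodule.finrank_lt_finrank_of_lt
      refine lt_of_le_of_ne le_sup_left ?_
      intro hEq
      exact hγU (hEq ▸ le_sup_right (α := Submodule K W) (mem_span_singleton_self γ))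
    have := finrank_sup_span_singleton_le U (β - γ)
    omega


/-- Descent: composing the center with the projection `P = id - b ⊗ u` does not decrease
the cardinality of the balls intersection. -/
lemma card_interT_le_comp_proj [Finite V] [Finite W] (r s : ℕ)
    (C : V →ₗ[K] W) (b : V →ₗ[K] K) (u : V) (hbu : b u = 1) :
    Nat.card (interT K r s C) ≤
      Nat.card (interT K r s (C ∘ₗ (LinearMap.id - b.smulRight u))) := by
  classical
  haveI : Finite (V →ₗ[K] W) := Finite.of_injective _ (DFunLike.coe_injective (F := V →ₗ[K] W))
  set P : V →ₗ[K] V := LinearMap.id - b.smulRight u with hPdef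
  have hPapp : ∀ v, P v = v - b v • u := fun v => rfl
  have hPu : P u = 0 := by simp [hPapp, hbu]
  have hbP : ∀ v, b (P v) = 0 := by
    intro v; rw [hPapp]; simp [map_sub, map_smul, hbu, smul_eq_mul]
  set C' : V →ₗ[K] W := C ∘ₗ P with hC'def
  have hcompPu : ∀ (X : V →ₗ[K] W), (X ∘ₗ P) u = 0 := by
    intro X; simp [LinearMap.comp_apply, hPu]
  have hdec : ∀ X : V →ₗ[K] W, X ∘ₗ P + b.smulRight (X u) = X := by
    intro X; ext v
    simp only [LinearMap.add_apply, LinearMap.comp_apply, LinearMap.smulRight_apply, hPapp,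
      map_sub, map_smul]
    abel
  have hsm : ∀ (x y : W), b.smulRight (x - y) = b.smulRight x - b.smulRight y := by
    intro x y; ext v; simp [smul_sub]
  have hmem : ∀ (D Z : V →ₗ[K] W), D u = 0 → Z u = 0 → ∀ t : ℕ, ∀ β : W,
      (finrank K (LinearMap.range (Z + b.smulRight β - (D + b.smulRight (C u)))) ≤ t ↔
        finrank K ↥(LinearMap.range (Z - D) ⊔ span K {β - C u}) ≤ t) := by
    intro D Z hDu hZu t β
    have h1 : Z + b.smulRight β - (D + b.smulRight (C u)) = (Z - D) + b.smulRight (β - C u) := by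
      rw [hsm]; abel
    rw [h1, range_add_smulRight b u hbu (Z - D) (by simp [hZu, hDu])]
  have hCdec : C' + b.smulRight (C u) = C := hdec C
  have hC'u : C' u = 0 := hcompPu C
  have hmemC : ∀ (Z : V →ₗ[K] W), Z u = 0 → ∀ β : W,
      (Z + b.smulRight β ∈ interT K r s C ↔
        (finrank K ↥(LinearMap.range (Z - C') ⊔ span K {β - C u}) ≤ r ∧
          finrank K ↥(LinearMap.range Z ⊔ span K {β}) ≤ s)) := by
    intro Z hZu β
    have e1 : Z + b.smulRight β - C = Z + b.smulRight β - (C' + b.smulRight (C u)) := by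
      rw [hCdec]
    unfold interT
    rw [Set.mem_setOf_eq, e1, hmem C' Z hC'u hZu r β, range_add_smulRight b u hbu Z hZu]
  have hmemC' : ∀ (Z : V →ₗ[K] W), Z u = 0 → ∀ β : W,
      (Z + b.smulRight β ∈ interT K r s C' ↔
        (finrank K ↥(LinearMap.range (Z - C') ⊔ span K {β}) ≤ r ∧
          finrank K ↥(LinearMap.range Z ⊔ span K {β}) ≤ s)) := by
    intro Z hZu β
    have h1 : Z + b.smulRight β - C' = (Z - C') + b.smulRight β := by abel
    unfold interT
    rw [Set.mem_setOf_eq, h1, range_add_smulRight b u hbu (Z - C') (by simp [hZu, hC'u]),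
      range_add_smulRight b u hbu Z hZu]
  let Good : (V →ₗ[K] W) → W → Prop := fun Z β =>
    finrank K ↥(LinearMap.range (Z - C') ⊔ span K {β - C u}) ≤ r ∧
      finrank K ↥(LinearMap.range Z ⊔ span K {β}) ≤ s
  let β₀ : (V →ₗ[K] W) → W := fun Z => if h : ∃ β, Good Z β then h.choose else 0
  have key : ∀ Y : V →ₗ[K] W, Y ∈ interT K r s C →
      (Y ∘ₗ P + b.smulRight (Y u - β₀ (Y ∘ₗ P)) ∈ interT K r s C') := by
    intro Y hY
    have hZu : (Y ∘ₗ P) u = 0 := hcompPu Y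
    have hYfib : Good (Y ∘ₗ P) (Y u) := by
      have : Y ∘ₗ P + b.smulRight (Y u) ∈ interT K r s C := by rw [hdec Y]; exact hY
      exact (hmemC (Y ∘ₗ P) hZu (Y u)).mp this
    have hex : ∃ β, Good (Y ∘ₗ P) β := ⟨Y u, hYfib⟩
    have hβ₀ : Good (Y ∘ₗ P) (β₀ (Y ∘ₗ P)) := by
      show Good (Y ∘ₗ P) (if h : ∃ β, Good (Y ∘ₗ P) β then h.choose else 0)
      rw [dif_pos hex]; exact hex.choose_spec
    rw [hmemC' (Y ∘ₗ P) hZu]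
    constructor
    · have := sub_mem_dimset hYfib.1 hβ₀.1
      rwa [sub_sub_sub_cancel_right] at this
    · exact sub_mem_dimset hYfib.2 hβ₀.2
  have hinj : Function.Injective
      (fun Y : interT K r s C =>
        (⟨(Y : V →ₗ[K] W) ∘ₗ P + b.smulRight ((Y : V →ₗ[K] W) u - β₀ ((Y : V →ₗ[K] W) ∘ₗ P)),
          key _ Y.2⟩ : interT K r s C')) := by
    rintro ⟨Y₁, h₁⟩ ⟨Y₂, h₂⟩ hEq
    simp only [Subtype.mk_eq_mk] at hEq
    have hPP : ∀ X : V →ₗ[K] W, (X ∘ₗ P) ∘ₗ P = X ∘ₗ P := by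
      intro X; ext v
      simp only [LinearMap.comp_apply]
      congr 1
      conv_lhs => rw [hPapp (P v)]
      rw [hbP, zero_smul, sub_zero]
    have hsmP : ∀ x : W, (b.smulRight x) ∘ₗ P = 0 := by
      intro x; ext v; simp [LinearMap.comp_apply, hbP]
    have hZeq : Y₁ ∘ₗ P = Y₂ ∘ₗ P := by
      have h0 := congrArg (fun X : V →ₗ[K] W => X ∘ₗ P) hEq
      simpa [LinearMap.add_comp, hPP, hsmP] using h0
    have hueq : Y₁ u = Y₂ u := by
      have h0 := congrArg (fun X : V →ₗ[K] W => X u) hEq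
      simp only [LinearMap.add_apply, LinearMap.smulRight_apply, hbu, one_smul] at h0
      rw [hcompPu Y₁, hcompPu Y₂, hZeq, zero_add, zero_add] at h0
      exact sub_left_injective h0
    apply Subtype.ext
    show Y₁ = Y₂
    rw [← hdec Y₁, ← hdec Y₂, hZeq, hueq]
  exact Nat.card_le_card_of_injective _ hinj


/-- Rank drop: for `C ≠ 0` there is a projection `P = id - b ⊗ u` with `b u = 1` such that
`C ∘ P` has rank exactly one less. -/
lemma exists_proj_rank_drop (C : V →ₗ[K] W) (hC : C ≠ 0) :
    ∃ (b : V →ₗ[K] K) (u : V), b u = 1 ∧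
      finrank K (LinearMap.range (C ∘ₗ (LinearMap.id - b.smulRight u))) + 1 =
        finrank K (LinearMap.range C) := by
  obtain ⟨u, hu⟩ : ∃ u, C u ≠ 0 := by
    by_contra hall
    push_neg at hall
    exact hC (LinearMap.ext fun v => by rw [hall v]; rfl)
  obtain ⟨f, hf⟩ : ∃ f : Module.Dual K W, f (C u) ≠ 0 := by
    by_contra hall
    push_neg at hall
    exact hu ((Module.forall_dual_apply_eq_zero_iff K (C u)).mp hall)
  set w : Module.Dual K W := (f (C u))⁻¹ • f with hw
  have hwCu : w (C u) = 1 := by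
    rw [hw]; simp [LinearMap.smul_apply, inv_mul_cancel₀ hf]
  set b : V →ₗ[K] K := w ∘ₗ C with hb
  have hbu : b u = 1 := hwCu
  refine ⟨b, u, hbu, ?_⟩
  set P : V →ₗ[K] V := LinearMap.id - b.smulRight u with hP
  have hPapp : ∀ v, P v = v - b v • u := fun v => rfl
  have hCP : ∀ v, C (P v) = C v - b v • C u := by
    intro v; rw [hPapp, map_sub, map_smul]
  have hrange : LinearMap.range (C ∘ₗ P) = LinearMap.range C ⊓ LinearMap.ker w := by
    apply le_antisymm
    · rintro _ ⟨v, rfl⟩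
      refine Submodule.mem_inf.mpr ⟨⟨P v, rfl⟩, ?_⟩
      show w (C (P v)) = 0
      rw [hCP, map_sub, map_smul]
      have : w (C v) = b v := rfl
      rw [this, hwCu, smul_eq_mul, mul_one, sub_self]
    · rintro x ⟨⟨v, rfl⟩, hxk⟩
      refine ⟨v, ?_⟩
      show C (P v) = C v
      rw [hCP]
      have hbv : b v = 0 := hxk
      rw [hbv, zero_smul, sub_zero]
  rw [hrange]
  set U := LinearMap.range C with hU
  have hCuU : C u ∈ U := LinearMap.mem_range_self C u
  have hlt : U ⊓ LinearMap.ker w < U := by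
    refine lt_of_le_of_ne inf_le_left ?_
    intro hEq
    have h1 : C u ∈ U ⊓ LinearMap.ker w := by rw [hEq]; exact hCuU
    have h2 : w (C u) = 0 := h1.2
    rw [hwCu] at h2
    exact one_ne_zero h2
  have h1 : finrank K ↥(U ⊓ LinearMap.ker w) < finrank K ↥U :=
    Submodule.finrank_lt_finrank_of_lt hlt
  have h2 : U ≤ (U ⊓ LinearMap.ker w) ⊔ span K {C u} := by
    intro x hx
    have hxdec : x = (x - w x • C u) + w x • C u := by abel
    rw [hxdec]
    refine add_mem (Submodule.mem_sup_left ?_)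
      (Submodule.mem_sup_right (smul_mem _ _ (mem_span_singleton_self _)))
    refine Submodule.mem_inf.mpr ⟨sub_mem hx (smul_mem _ _ hCuU), ?_⟩
    show w (x - w x • C u) = 0
    rw [map_sub, map_smul, hwCu, smul_eq_mul, mul_one, sub_self]
  have h3 : finrank K ↥U ≤ finrank K ↥(U ⊓ LinearMap.ker w) + 1 :=
    le_trans (Submodule.finrank_mono h2) (finrank_sup_span_singleton_le _ _)
  omega

variable [FiniteDimensional K V]

/-- Two linear maps of equal rank are equivalent. -/
lemma exists_equiv_comp_eq (φ ψ : V →ₗ[K] W)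
    (h : finrank K (LinearMap.range φ) = finrank K (LinearMap.range ψ)) :
    ∃ (σ : V ≃ₗ[K] V) (τ : W ≃ₗ[K] W), ∀ v, τ (φ (σ v)) = ψ v := by
  classical
  have hrn₁ := LinearMap.finrank_range_add_finrank_ker φ
  have hrn₂ := LinearMap.finrank_range_add_finrank_ker ψ
  obtain ⟨P₁, hP₁⟩ := Submodule.exists_isCompl (LinearMap.ker ψ)
  obtain ⟨P₂, hP₂⟩ := Submodule.exists_isCompl (LinearMap.ker φ)
  have hc₁ := Submodule.finrank_add_eq_of_isCompl hP₁
  have hc₂ := Submodule.finrank_add_eq_of_isCompl hP₂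
  have hKK : finrank K ↥(LinearMap.ker ψ) = finrank K ↥(LinearMap.ker φ) := by omega
  have hPP : finrank K ↥P₁ = finrank K ↥P₂ := by omega
  let eK : ↥(LinearMap.ker ψ) ≃ₗ[K] ↥(LinearMap.ker φ) := LinearEquiv.ofFinrankEq _ _ hKK
  let eP : ↥P₁ ≃ₗ[K] ↥P₂ := LinearEquiv.ofFinrankEq _ _ hPP
  let σ : V ≃ₗ[K] V :=
    (Submodule.prodEquivOfIsCompl (LinearMap.ker ψ) P₁ hP₁).symm ≪≫ₗ
      ((eK.prodCongr eP) ≪≫ₗ Submodule.prodEquivOfIsCompl (LinearMap.ker φ) P₂ hP₂)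
  have hσK : ∀ x : ↥(LinearMap.ker ψ), σ (x : V) = ((eK x : ↥(LinearMap.ker φ)) : V) := by
    intro x
    show (Submodule.prodEquivOfIsCompl (LinearMap.ker φ) P₂ hP₂)
      ((eK.prodCongr eP) ((Submodule.prodEquivOfIsCompl (LinearMap.ker ψ) P₁ hP₁).symm (x : V))) = _
    rw [Submodule.prodEquivOfIsCompl_symm_apply_left (LinearMap.ker ψ) P₁ hP₁ x,
      LinearEquiv.prodCongr_apply]
    simp [Submodule.coe_prodEquivOfIsCompl']
  set σL : V →ₗ[K] V := σ.toLinearMap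
  set χ : V →ₗ[K] W := φ ∘ₗ σL with hχ
  have hrange : LinearMap.range χ = LinearMap.range φ := by
    rw [hχ, LinearMap.range_comp]
    have h0 : LinearMap.range σL = ⊤ := LinearEquiv.range σ
    rw [h0, Submodule.map_top]
  have hkerle : LinearMap.ker ψ ≤ LinearMap.ker χ := by
    intro v hv
    show φ (σ v) = 0
    have h1 : φ (σ v) = φ ((eK ⟨v, hv⟩ : ↥(LinearMap.ker φ)) : V) :=
      congrArg φ (hσK ⟨v, hv⟩)
    rw [h1]
    exact (eK ⟨v, hv⟩).2
  have hker : LinearMap.ker χ = LinearMap.ker ψ := by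
    refine (Submodule.eq_of_le_of_finrank_le hkerle ?_).symm
    have hrn₃ := LinearMap.finrank_range_add_finrank_ker χ
    have hre : finrank K ↥(LinearMap.range χ) = finrank K ↥(LinearMap.range φ) := by
      rw [hrange]
    omega
  let τ₀ : ↥(LinearMap.range χ) ≃ₗ[K] ↥(LinearMap.range ψ) :=
    (LinearMap.quotKerEquivRange χ).symm ≪≫ₗ
      (Submodule.quotEquivOfEq _ _ hker ≪≫ₗ LinearMap.quotKerEquivRange ψ)
  have hτ₀ : ∀ v : V, (τ₀ ⟨χ v, LinearMap.mem_range_self χ v⟩ : W) = ψ v := by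
    intro v
    show ((LinearMap.quotKerEquivRange ψ)
      ((Submodule.quotEquivOfEq _ _ hker)
        ((LinearMap.quotKerEquivRange χ).symm ⟨χ v, LinearMap.mem_range_self χ v⟩)) : W) = ψ v
    rw [LinearMap.quotKerEquivRange_symm_apply_image]
    rw [Submodule.mkQ_apply, Submodule.quotEquivOfEq_mk, LinearMap.quotKerEquivRange_apply_mk]
  obtain ⟨Q₁, hQ₁⟩ := Submodule.exists_isCompl (LinearMap.range χ)
  obtain ⟨Q₂, hQ₂⟩ := Submodule.exists_isCompl (LinearMap.range ψ)
  have hd₁ := Submodule.finrank_add_eq_of_isCompl hQ₁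
  have hd₂ := Submodule.finrank_add_eq_of_isCompl hQ₂
  have hr : finrank K ↥(LinearMap.range χ) = finrank K ↥(LinearMap.range ψ) := by
    rw [hrange]; exact h
  have hQQ : finrank K ↥Q₁ = finrank K ↥Q₂ := by omega
  let eQ : ↥Q₁ ≃ₗ[K] ↥Q₂ := LinearEquiv.ofFinrankEq _ _ hQQ
  let τ : W ≃ₗ[K] W :=
    (Submodule.prodEquivOfIsCompl (LinearMap.range χ) Q₁ hQ₁).symm ≪≫ₗ
      ((τ₀.prodCongr eQ) ≪≫ₗ Submodule.prodEquivOfIsCompl (LinearMap.range ψ) Q₂ hQ₂)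
  refine ⟨σ, τ, fun v => ?_⟩
  have h5 : φ (σ v) = χ v := rfl
  rw [h5]
  show (Submodule.prodEquivOfIsCompl (LinearMap.range ψ) Q₂ hQ₂)
    ((τ₀.prodCongr eQ)
      ((Submodule.prodEquivOfIsCompl (LinearMap.range χ) Q₁ hQ₁).symm (χ v))) = ψ v
  have hx : χ v = ((⟨χ v, LinearMap.mem_range_self χ v⟩ : ↥(LinearMap.range χ)) : W) := rfl
  rw [hx, Submodule.prodEquivOfIsCompl_symm_apply_left (LinearMap.range χ) Q₁ hQ₁,
    LinearEquiv.prodCongr_apply]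
  simp only [map_zero, Submodule.coe_prodEquivOfIsCompl', Submodule.coe_zero, add_zero]
  exact hτ₀ v


lemma card_interT_eq_of_finrank_eq [FiniteDimensional K V] [FiniteDimensional K W]
    (r s : ℕ) (C C' : V →ₗ[K] W)
    (h : finrank K (LinearMap.range C) = finrank K (LinearMap.range C')) :
    Nat.card (interT K r s C) = Nat.card (interT K r s C') := by
  obtain ⟨σ, τ, hστ⟩ := exists_equiv_comp_eq C C' h
  let E : (V →ₗ[K] W) ≃ₗ[K] (V →ₗ[K] W) := LinearEquiv.arrowCongr σ.symm τ
  have hEapp : ∀ (X : V →ₗ[K] W),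
      E X = (τ : W →ₗ[K] W) ∘ₗ (X ∘ₗ (σ : V →ₗ[K] V)) := by
    intro X; ext v; rfl
  have hfr : ∀ X : V →ₗ[K] W,
      finrank K (LinearMap.range (E X)) = finrank K (LinearMap.range X) := by
    intro X
    rw [hEapp, LinearMap.range_comp, LinearMap.range_comp]
    have h0 : LinearMap.range (σ : V →ₗ[K] V) = ⊤ := LinearEquiv.range σ
    rw [h0, Submodule.map_top]
    exact LinearEquiv.finrank_map_eq τ _
  have hEC : E C = C' := by
    ext v
    rw [hEapp]
    exact hστ v
  apply Nat.card_congr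
  refine Equiv.subtypeEquiv E.toEquiv ?_
  intro Y
  show (Y ∈ interT K r s C) ↔ (E Y ∈ interT K r s C')
  unfold interT
  rw [Set.mem_setOf_eq, Set.mem_setOf_eq]
  have h1 : E Y - C' = E (Y - C) := by rw [map_sub, hEC]
  rw [h1, hfr (Y - C), hfr Y]

lemma card_interT_mono [Finite V] [Finite W] [FiniteDimensional K V] [FiniteDimensional K W]
    (r s : ℕ) :
    ∀ (d : ℕ) (C C' : V →ₗ[K] W), finrank K (LinearMap.range C) = d →
      finrank K (LinearMap.range C') ≤ d →
      Nat.card (interT K r s C) ≤ Nat.card (interT K r s C') := by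
  intro d
  induction d with
  | zero =>
    intro C C' hC hC'
    exact le_of_eq (card_interT_eq_of_finrank_eq r s C C' (by omega))
  | succ k ih =>
    intro C C' hC hC'
    rcases eq_or_lt_of_le hC' with heq | hlt
    · exact le_of_eq (card_interT_eq_of_finrank_eq r s C C' (by omega))
    · have hC0 : C ≠ 0 := by
        intro h0
        rw [h0, LinearMap.range_zero, finrank_bot] at hC
        omega
      obtain ⟨b, u, hbu, hdrop⟩ := exists_proj_rank_drop C hC0
      refine le_trans (card_interT_le_comp_proj r s C b u hbu) (ih _ C' (by omega) (by omega))


end Aux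

open Module Submodule LinearMap in
/-- The cardinality of the intersection of two balls with rank radii is nonincreasing in the
rank distance between the centers. -/
theorem stmt6 (q m n r s : ℕ) (Fq Fqm : Type) [Field Fq] [Fintype Fq] [Field Fqm] [Fintype Fqm]
    [Algebra Fq Fqm] (hq : Fintype.card Fq = q) (hm : Module.finrank Fq Fqm = m)
    (hr : r ≤ n) (hs : s ≤ n)
    (c₁ c₂ c₁' c₂' : Fin n → Fqm)
    (h : rankWeight Fq (c₁ - c₂) > rankWeight Fq (c₁' - c₂')) :
    Nat.card ↥(rankBall Fq r c₁ ∩ rankBall Fq s c₂)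
      ≤ Nat.card ↥(rankBall Fq r c₁' ∩ rankBall Fq s c₂') := by
  classical
  set Ψ : (Fin n → Fqm) ≃ₗ[Fq] ((Fin n → Fq) →ₗ[Fq] Fqm) :=
    (Pi.basisFun Fq (Fin n)).constr Fq with hΨ
  have hrw : ∀ y : Fin n → Fqm, rankWeight Fq y = finrank Fq (LinearMap.range (Ψ y)) := by
    intro y
    rw [hΨ]
    show rankWeight Fq y = finrank Fq (LinearMap.range ((Pi.basisFun Fq (Fin n)).constr Fq y))
    rw [Basis.constr_range]
    rfl
  have key : ∀ a b : Fin n → Fqm,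
      Nat.card ↥(rankBall Fq r a ∩ rankBall Fq s b) =
        Nat.card (interT Fq r s (Ψ (a - b))) := by
    intro a b
    apply Nat.card_congr
    refine Equiv.subtypeEquiv ((Equiv.subRight b).trans Ψ.toEquiv) ?_
    intro y
    show (y ∈ rankBall Fq r a ∩ rankBall Fq s b) ↔ _
    rw [Set.mem_inter_iff]
    unfold rankBall interT
    rw [Set.mem_setOf_eq, Set.mem_setOf_eq, Set.mem_setOf_eq]
    have e1 : Ψ (y - b) - Ψ (a - b) = Ψ (y - a) := by
      rw [← map_sub]
      congr 1
      abel
    have e2 : ((Equiv.subRight b).trans Ψ.toEquiv) y = Ψ (y - b) := rfl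
    rw [e2, e1, ← hrw, ← hrw]
  rw [key c₁ c₂, key c₁' c₂']
  exact card_interT_mono r s (finrank Fq (LinearMap.range (Ψ (c₁ - c₂)))) _ _ rfl
    (by rw [← hrw, ← hrw]; omega)

end
end

section
/- If c₁, c₂ ∈ GF(q^m)^n satisfy d_R(c₁,c₂) = r, then |B_r(c₁) ∩ B_1(c₂)| = 1 + (q^m − q^r)·(q^r − 1)/(q − 1) + (q^r − 1)·(q^n − 1)/(q − 1). -/
open scoped BigOperators

noncomputable section

section RankAux

open Module Submodule

variable {Fq Fqm : Type} [Field Fq] [Field Fqm] [Algebra Fq Fqm] {n : ℕ}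

lemma rankWeight_neg (x : Fin n → Fqm) : rankWeight Fq (-x) = rankWeight Fq x := by
  unfold rankWeight
  have h : Set.range (-x) = -Set.range x := by
    ext y
    constructor
    · rintro ⟨i, rfl⟩; exact ⟨i, by simp⟩
    · rintro ⟨i, hi⟩; exact ⟨i, by rw [Pi.neg_apply, hi, neg_neg]⟩
  rw [h, Submodule.span_neg]

lemma rankWeight_zero : rankWeight Fq (0 : Fin n → Fqm) = 0 := by
  unfold rankWeight
  have : Submodule.span Fq (Set.range (0 : Fin n → Fqm)) = ⊥ := by
    rw [eq_bot_iff, Submodule.span_le]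
    rintro _ ⟨i, rfl⟩; simp
  rw [this, finrank_bot]

lemma rankWeight_mul_le_one [FiniteDimensional Fq Fqm] (lam : Fqm) (v : Fin n → Fq) :
    rankWeight Fq (fun i => lam * algebraMap Fq Fqm (v i)) ≤ 1 := by
  unfold rankWeight
  have hle : Submodule.span Fq (Set.range fun i => lam * algebraMap Fq Fqm (v i))
      ≤ Submodule.span Fq {lam} := by
    rw [Submodule.span_le]
    rintro _ ⟨i, rfl⟩
    exact Submodule.mem_span_singleton.mpr ⟨v i, by rw [Algebra.smul_def, mul_comm]⟩
  refine le_trans (Submodule.finrank_mono hle) ?_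
  by_cases h : lam = 0
  · rw [h, Submodule.span_zero_singleton, finrank_bot]; omega
  · rw [finrank_span_singleton h]

lemma rank_le_one_decomp [FiniteDimensional Fq Fqm] {z : Fin n → Fqm}
    (hz : rankWeight Fq z ≤ 1) :
    ∃ (lam : Fqm) (v : Fin n → Fq), z = fun i => lam * algebraMap Fq Fqm (v i) := by
  by_cases h0 : z = 0
  · exact ⟨0, 0, by funext i; simp [h0]⟩
  · obtain ⟨i₀, hi₀⟩ := Function.ne_iff.mp h0
    have hi₀' : z i₀ ≠ 0 := hi₀
    have hmem : ∀ j, z j ∈ Submodule.span Fq (Set.range z) :=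
      fun j => Submodule.subset_span ⟨j, rfl⟩
    have hsp : Submodule.span Fq {z i₀} = Submodule.span Fq (Set.range z) := by
      apply Submodule.eq_of_le_of_finrank_le
      · exact Submodule.span_mono (by simp)
      · rw [finrank_span_singleton hi₀']
        exact hz
    have hch : ∀ j, ∃ c : Fq, c • (z i₀) = z j := fun j =>
      Submodule.mem_span_singleton.mp (hsp ▸ hmem j)
    choose v hv using hch
    refine ⟨z i₀, v, funext fun j => ?_⟩
    rw [← hv j, Algebra.smul_def, mul_comm]


variable (Fq) in
/-- The "row space" map sending a dual functional to its values on the coordinates of `e`. -/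
def rhoMap (e : Fin n → Fqm) : Module.Dual Fq Fqm →ₗ[Fq] (Fin n → Fq) where
  toFun f := fun i => f (e i)
  map_add' f g := by funext i; simp
  map_smul' c f := by funext i; simp

lemma finrank_range_rho [FiniteDimensional Fq Fqm] (e : Fin n → Fqm) :
    finrank Fq (LinearMap.range (rhoMap Fq e)) = finrank Fq (span Fq (Set.range e)) := by
  have hker : LinearMap.ker (rhoMap Fq e)
      = (Submodule.span Fq (Set.range e)).dualAnnihilator := by
    ext f
    rw [LinearMap.mem_ker, Submodule.mem_dualAnnihilator]
    constructor
    · intro hf w hw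
      have hle : Submodule.span Fq (Set.range e) ≤ LinearMap.ker f :=
        Submodule.span_le.mpr (by rintro _ ⟨i, rfl⟩; exact congrFun hf i)
      exact hle hw
    · intro hf
      funext i
      exact hf _ (Submodule.subset_span ⟨i, rfl⟩)
  have h1 := LinearMap.finrank_range_add_finrank_ker (rhoMap Fq e)
  rw [hker, Subspace.dual_finrank_eq] at h1
  have h2 : finrank Fq ((Fqm ⧸ (span Fq (Set.range e))))
      = finrank Fq (span Fq (Set.range e)).dualAnnihilator :=
    LinearEquiv.finrank_eq (Subspace.quotEquivAnnihilator _)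
  have h3 := Submodule.finrank_quotient_add_finrank (span Fq (Set.range e))
  omega

lemma exists_dual_extend [FiniteDimensional Fq Fqm] (e : Fin n → Fqm) (v : Fin n → Fq)
    (h : ∀ u : Fin n → Fq, (∑ i, u i • e i) = 0 → (∑ i, u i * v i) = 0) :
    ∃ f : Module.Dual Fq Fqm, ∀ i, f (e i) = v i := by
  classical
  set φ : (Fin n → Fq) →ₗ[Fq] Fqm := Fintype.linearCombination Fq e with hφ
  set h' : (Fin n → Fq) →ₗ[Fq] Fq := Fintype.linearCombination Fq v with hh'
  have hker : LinearMap.ker φ ≤ LinearMap.ker h' := by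
    intro u hu
    rw [LinearMap.mem_ker] at hu ⊢
    rw [hh', Fintype.linearCombination_apply]
    simp only [smul_eq_mul]
    apply h
    rw [hφ, Fintype.linearCombination_apply] at hu
    exact hu
  obtain ⟨g, hg⟩ := LinearMap.exists_extend
    (((LinearMap.ker φ).liftQ h' hker).comp (φ.quotKerEquivRange.symm.toLinearMap))
  refine ⟨g, fun i => ?_⟩
  have hval : φ (Pi.single i 1) = e i := by
    rw [hφ, Fintype.linearCombination_apply_single, one_smul]
  have hei : e i ∈ LinearMap.range φ := ⟨Pi.single i 1, hval⟩
  have hsymm : φ.quotKerEquivRange.symm ⟨e i, hei⟩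
      = Submodule.Quotient.mk (Pi.single i 1) := by
    rw [LinearEquiv.symm_apply_eq]
    exact Subtype.ext (by rw [LinearMap.quotKerEquivRange_apply_mk]; exact hval.symm)
  have := LinearMap.ext_iff.mp hg ⟨e i, hei⟩
  simp only [LinearMap.comp_apply, Submodule.coe_subtype, LinearEquiv.coe_coe] at this
  rw [this, hsymm, Submodule.liftQ_apply, hh', Fintype.linearCombination_apply_single, smul_eq_mul,
    one_mul]


lemma key_iff [FiniteDimensional Fq Fqm] (e : Fin n → Fqm) (lam : Fqm) (v : Fin n → Fq) :
    rankWeight Fq ((fun i => lam * algebraMap Fq Fqm (v i)) - e)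
        ≤ finrank Fq (span Fq (Set.range e))
      ↔ lam ∈ span Fq (Set.range e) ∨ (∃ f : Module.Dual Fq Fqm, ∀ i, f (e i) = v i) := by
  classical
  set E := span Fq (Set.range e) with hE
  have hcoord : ∀ i, ((fun i => lam * algebraMap Fq Fqm (v i)) - e) i
      = lam * algebraMap Fq Fqm (v i) - e i := fun i => rfl
  constructor
  · intro hrk
    by_contra hcon
    push_neg at hcon
    obtain ⟨hlam, hf⟩ := hcon
    have hlam0 : lam ≠ 0 := fun hz => hlam (hz ▸ zero_mem _)
    have hex : ∃ u : Fin n → Fq, (∑ i, u i • e i) = 0 ∧ (∑ i, u i * v i) ≠ 0 := by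
      by_contra hno
      push_neg at hno
      obtain ⟨f, hfe⟩ := exists_dual_extend e v hno
      obtain ⟨i, hi⟩ := hf f
      exact hi (hfe i)
    obtain ⟨u₀, hu1, hu2⟩ := hex
    set W := Submodule.span Fq (Set.range ((fun i => lam * algebraMap Fq Fqm (v i)) - e)) with hW
    set c : Fq := ∑ i, u₀ i * v i with hc
    have hWel : (∑ i, u₀ i • (lam * algebraMap Fq Fqm (v i) - e i)) ∈ W :=
      Submodule.sum_mem _ fun i _ =>
        Submodule.smul_mem _ _ (Submodule.subset_span ⟨i, (hcoord i)⟩)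
    have hsum : (∑ i, u₀ i • (lam * algebraMap Fq Fqm (v i) - e i))
        = lam * algebraMap Fq Fqm c := by
      have hterm : ∀ i, u₀ i • (lam * algebraMap Fq Fqm (v i) - e i)
          = lam * algebraMap Fq Fqm (u₀ i * v i) - u₀ i • e i := by
        intro i
        rw [smul_sub, Algebra.smul_def, map_mul]
        ring_nf
      simp only [hterm]
      rw [Finset.sum_sub_distrib, hu1, sub_zero, hc, map_sum, Finset.mul_sum]
    have hcalg : algebraMap Fq Fqm c ≠ 0 := by
      rw [map_ne_zero_iff _ (algebraMap Fq Fqm).injective]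
      exact hu2
    have hlamW : lam ∈ W := by
      have h1 : lam * algebraMap Fq Fqm c ∈ W := hsum ▸ hWel
      have h2 := W.smul_mem c⁻¹ h1
      rwa [Algebra.smul_def, map_inv₀, ← mul_assoc, mul_comm ((algebraMap Fq Fqm c)⁻¹) lam,
        mul_assoc, inv_mul_cancel₀ hcalg, mul_one] at h2
    have hEW : E ≤ W := by
      rw [hE, Submodule.span_le]
      rintro _ ⟨i, rfl⟩
      have h1 : lam * algebraMap Fq Fqm (v i) - e i ∈ W := Submodule.subset_span ⟨i, hcoord i⟩
      have h2 : lam * algebraMap Fq Fqm (v i) ∈ W := by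
        have := W.smul_mem (v i) hlamW
        rwa [Algebra.smul_def, mul_comm] at this
      have h3 := W.sub_mem h2 h1
      simpa using h3
    have hlin : E ⊔ span Fq {lam} ≤ W :=
      sup_le hEW (Submodule.span_le.mpr (by simpa using hlamW))
    have hinf : E ⊓ span Fq {lam} = ⊥ := by
      rw [eq_bot_iff]
      rintro x ⟨hxE, hxl⟩
      obtain ⟨a, rfl⟩ := Submodule.mem_span_singleton.mp hxl
      rcases eq_or_ne a 0 with rfl | ha
      · simp
      · exfalso
        apply hlam
        have := E.smul_mem a⁻¹ hxE
        rwa [smul_smul, inv_mul_cancel₀ ha, one_smul] at this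
    have hsupr := Submodule.finrank_sup_add_finrank_inf_eq E (span Fq {lam})
    rw [hinf, finrank_bot, finrank_span_singleton hlam0] at hsupr
    have hmono := Submodule.finrank_mono hlin
    unfold rankWeight at hrk
    rw [← hW] at hrk
    omega
  · rintro (hlam | ⟨f, hfe⟩)
    · unfold rankWeight
      apply Submodule.finrank_mono
      rw [Submodule.span_le]
      rintro _ ⟨i, rfl⟩
      rw [hcoord i]
      refine Submodule.sub_mem _ ?_ (Submodule.subset_span ⟨i, rfl⟩)
      have := E.smul_mem (v i) hlam
      rwa [Algebra.smul_def, mul_comm] at this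
    · set g : Fqm →ₗ[Fq] Fqm := (LinearMap.id : Fqm →ₗ[Fq] Fqm) - (f.smulRight lam) with hg
      have hle : Submodule.span Fq (Set.range ((fun i => lam * algebraMap Fq Fqm (v i)) - e))
          ≤ Submodule.map g E := by
        rw [Submodule.span_le]
        rintro _ ⟨i, rfl⟩
        rw [hcoord i]
        have hge : g (e i) = e i - lam * algebraMap Fq Fqm (v i) := by
          rw [hg]
          simp only [LinearMap.sub_apply, LinearMap.id_apply, LinearMap.smulRight_apply, hfe i,
            Algebra.smul_def]
          rw [mul_comm]
        have hmem : g (e i) ∈ Submodule.map g E :=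
          Submodule.mem_map_of_mem (Submodule.subset_span ⟨i, rfl⟩)
        have := Submodule.neg_mem _ hmem
        rwa [hge, neg_sub] at this
      unfold rankWeight
      exact le_trans (Submodule.finrank_mono hle) (Submodule.finrank_map_le g E)

end RankAux

/-- If `d_R(c₁, c₂) = r` then
`|B_r(c₁) ∩ B_1(c₂)| = 1 + (q^m - q^r)[r 1]_q + (q^r - 1)[n 1]_q`. -/
theorem stmt7 (q m n r : ℕ) (Fq Fqm : Type) [Field Fq] [Fintype Fq] [Field Fqm] [Fintype Fqm]
    [Algebra Fq Fqm] (hq : Fintype.card Fq = q) (hm : Module.finrank Fq Fqm = m)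
    (hr : r ≤ min m n)
    (c₁ c₂ : Fin n → Fqm) (h : rankWeight Fq (c₁ - c₂) = r) :
    (Nat.card ↥(rankBall Fq r c₁ ∩ rankBall Fq 1 c₂) : ℚ)
      = 1 + ((q : ℚ) ^ m - (q : ℚ) ^ r) * ((q : ℚ) ^ r - 1) / ((q : ℚ) - 1)
          + ((q : ℚ) ^ r - 1) * ((q : ℚ) ^ n - 1) / ((q : ℚ) - 1) := by
  classical
  haveI : FiniteDimensional Fq Fqm := Module.Finite.of_finite
  have halg_inj := (algebraMap Fq Fqm).injective
  have hrm : r ≤ m := le_trans hr (min_le_left _ _)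
  have hrn : r ≤ n := le_trans hr (min_le_right _ _)
  have hq2 : 2 ≤ q := hq ▸ Fintype.one_lt_card
  set e : Fin n → Fqm := c₁ - c₂ with he
  set E := Submodule.span Fq (Set.range e) with hE
  have hrE : Module.finrank Fq E = r := h
  set R := LinearMap.range (rhoMap Fq e) with hRdef
  have hrR : Module.finrank Fq R = r := (finrank_range_rho e).trans hrE
  have hkey : ∀ (lam : Fqm) (v : Fin n → Fq),
      rankWeight Fq ((fun i => lam * algebraMap Fq Fqm (v i)) - e) ≤ r ↔ lam ∈ E ∨ v ∈ R := by
    intro lam v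
    rw [← hrE]
    rw [key_iff e lam v]
    have hmemR : v ∈ R ↔ ∃ f : Module.Dual Fq Fqm, ∀ i, f (e i) = v i := by
      rw [hRdef]
      constructor
      · rintro ⟨f, rfl⟩; exact ⟨f, fun i => rfl⟩
      · rintro ⟨f, hf⟩; exact ⟨f, funext hf⟩
    rw [hmemR]
  -- cardinalities of basic objects
  have hcardFqm : Fintype.card Fqm = q ^ m := by
    rw [Module.card_eq_pow_finrank (K := Fq), hq, hm]
  have hcardFn : Fintype.card (Fin n → Fq) = q ^ n := by
    rw [Fintype.card_fun, hq, Fintype.card_fin]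
  set EF : Finset Fqm := (E : Set Fqm).toFinset with hEF
  set RF : Finset (Fin n → Fq) := (R : Set (Fin n → Fq)).toFinset with hRF
  have hEFcard : EF.card = q ^ r := by
    rw [hEF, Set.toFinset_card, Module.card_eq_pow_finrank (K := Fq) (V := (E : Set Fqm)), hq]
    simp only [SetLike.coe_sort_coe]
    rw [hrE]
  have hRFcard : RF.card = q ^ r := by
    rw [hRF, Set.toFinset_card,
      Module.card_eq_pow_finrank (K := Fq) (V := (R : Set (Fin n → Fq))), hq]
    simp only [SetLike.coe_sort_coe]
    rw [hrR]
  -- the shifted sets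
  set S : Set (Fin n → Fqm) :=
    {z | rankWeight Fq (z - e) ≤ r ∧ rankWeight Fq z ≤ 1} with hS
  set Sf : Finset (Fin n → Fqm) :=
    {z : Fin n → Fqm | z ≠ 0 ∧ rankWeight Fq (z - e) ≤ r ∧ rankWeight Fq z ≤ 1}.toFinset
    with hSf
  set Tf : Finset (Fqm × (Fin n → Fq)) :=
    {p : Fqm × (Fin n → Fq) | p.1 ≠ 0 ∧ p.2 ≠ 0 ∧
      rankWeight Fq ((fun i => p.1 * algebraMap Fq Fqm (p.2 i)) - e) ≤ r}.toFinset with hTf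
  -- Step 1
  have hstep1 : Nat.card ↥(rankBall Fq r c₁ ∩ rankBall Fq 1 c₂) = 1 + Sf.card := by
    have hequiv : ↥(rankBall Fq r c₁ ∩ rankBall Fq 1 c₂) ≃ ↥S :=
      { toFun := fun y => ⟨y.1 - c₂, by
          obtain ⟨hy1, hy2⟩ := y.2
          refine ⟨?_, hy2⟩
          have hrw : y.1 - c₂ - e = y.1 - c₁ := by rw [he]; abel
          rw [hrw]; exact hy1⟩
        invFun := fun z => ⟨z.1 + c₂, by
          obtain ⟨hz1, hz2⟩ := z.2
          constructor
          · show rankWeight Fq (z.1 + c₂ - c₁) ≤ r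
            have hrw : z.1 + c₂ - c₁ = z.1 - e := by rw [he]; abel
            rw [hrw]; exact hz1
          · show rankWeight Fq (z.1 + c₂ - c₂) ≤ 1
            have hrw : z.1 + c₂ - c₂ = z.1 := by abel
            rw [hrw]; exact hz2⟩
        left_inv := fun y => by apply Subtype.ext; simp
        right_inv := fun z => by apply Subtype.ext; simp }
    rw [Nat.card_congr hequiv, Nat.card_coe_set_eq, Set.ncard_eq_toFinset_card' S]
    have h00 : ((0 : Fin n → Fqm) - e) = -e := by rw [zero_sub]
    have hP0 : (0 : Fin n → Fqm) ∈ S := by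
      constructor
      · show rankWeight Fq ((0 : Fin n → Fqm) - e) ≤ r
        rw [h00, rankWeight_neg, h]
      · show rankWeight Fq (0 : Fin n → Fqm) ≤ 1
        rw [rankWeight_zero]; omega
    have hsplit : S.toFinset = insert 0 Sf := by
      ext z
      simp only [Set.mem_toFinset, Finset.mem_insert, hSf, hS, Set.mem_setOf_eq]
      constructor
      · intro hz
        by_cases h0 : z = 0
        · exact Or.inl h0
        · exact Or.inr ⟨h0, hz⟩
      · rintro (rfl | hz)
        · exact hP0
        · exact hz.2
    rw [hsplit, Finset.card_insert_of_notMem (by simp [hSf])]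
    omega
  -- Step 2 : fiber counting
  have hmapsto : ∀ p ∈ Tf, (fun i => p.1 * algebraMap Fq Fqm (p.2 i)) ∈ Sf := by
    intro p hp
    rw [hTf, Set.mem_toFinset] at hp
    obtain ⟨h1, h2, h3⟩ := hp
    rw [hSf, Set.mem_toFinset]
    refine ⟨?_, h3, rankWeight_mul_le_one p.1 p.2⟩
    intro hzz
    obtain ⟨i, hi⟩ := Function.ne_iff.mp h2
    have hi' : p.2 i ≠ 0 := hi
    have hco : p.1 * algebraMap Fq Fqm (p.2 i) = 0 := congrFun hzz i
    rcases mul_eq_zero.mp hco with hA | hB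
    · exact h1 hA
    · exact hi' (halg_inj (by rw [hB, map_zero]))
  have hfib : ∀ z ∈ Sf,
      (Tf.filter fun p => (fun i => p.1 * algebraMap Fq Fqm (p.2 i)) = z).card = q - 1 := by
    intro z hz
    rw [hSf, Set.mem_toFinset] at hz
    obtain ⟨hz0, hzr, hz1⟩ := hz
    obtain ⟨lam₀, v₀, hzd⟩ := rank_le_one_decomp hz1
    obtain ⟨i₀, hi₀⟩ := Function.ne_iff.mp hz0
    have hzi₀ : z i₀ ≠ 0 := hi₀
    have hv₀ : v₀ i₀ ≠ 0 := by
      intro hc; apply hzi₀; rw [hzd]; simp [hc]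
    have hlam₀ : lam₀ ≠ 0 := by
      intro hc; apply hzi₀; rw [hzd]; simp [hc]
    have halgv₀ : algebraMap Fq Fqm (v₀ i₀) ≠ 0 :=
      fun hc => hv₀ (halg_inj (by rw [hc, map_zero]))
    have hCf : (Finset.univ \ {(0 : Fq)}).card = q - 1 := by
      rw [Finset.card_sdiff_of_subset (by simp), Finset.card_univ, hq, Finset.card_singleton]
    rw [← hCf]
    apply Finset.card_nbij' (i := fun p : Fqm × (Fin n → Fq) => p.2 i₀)
        (j := fun c => (z i₀ * (algebraMap Fq Fqm c)⁻¹, fun i => c * (v₀ i₀)⁻¹ * v₀ i))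
    · intro p hp
      rw [Finset.mem_coe, Finset.mem_filter] at hp
      obtain ⟨hpT, hpz⟩ := hp
      rw [hTf, Set.mem_toFinset] at hpT
      obtain ⟨h1, -, -⟩ := hpT
      have hco : p.1 * algebraMap Fq Fqm (p.2 i₀) = z i₀ := congrFun hpz i₀
      simp only [Finset.mem_coe, Finset.mem_sdiff, Finset.mem_univ, Finset.mem_singleton, true_and]
      intro hc
      apply hzi₀
      rw [← hco, hc, map_zero, mul_zero]
    · intro c hc
      simp only [Finset.mem_coe, Finset.mem_sdiff, Finset.mem_univ, Finset.mem_singleton, true_and] at hc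
      have halgc : algebraMap Fq Fqm c ≠ 0 := fun h' => hc (halg_inj (by rw [h', map_zero]))
      have hΦeq : (fun i => (z i₀ * (algebraMap Fq Fqm c)⁻¹) *
          algebraMap Fq Fqm (c * (v₀ i₀)⁻¹ * v₀ i)) = z := by
        funext i
        simp only [hzd]
        rw [map_mul, map_mul, map_inv₀]
        field_simp
      rw [Finset.mem_coe, Finset.mem_filter, hTf, Set.mem_toFinset]
      refine ⟨⟨?_, ?_, ?_⟩, hΦeq⟩
      · exact mul_ne_zero hzi₀ (inv_ne_zero halgc)
      · apply Function.ne_iff.mpr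
        refine ⟨i₀, ?_⟩
        show c * (v₀ i₀)⁻¹ * v₀ i₀ ≠ 0
        rw [mul_assoc, inv_mul_cancel₀ hv₀, mul_one]
        exact hc
      · rw [hΦeq]
        exact hzr
    · intro p hp
      rw [Finset.mem_coe, Finset.mem_filter] at hp
      obtain ⟨hpT, hpz⟩ := hp
      rw [hTf, Set.mem_toFinset] at hpT
      obtain ⟨h1, h2, -⟩ := hpT
      have hcoord : ∀ i, p.1 * algebraMap Fq Fqm (p.2 i) = z i := fun i => congrFun hpz i
      have hp2i₀ : p.2 i₀ ≠ 0 := by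
        intro hc; apply hzi₀; rw [← hcoord i₀, hc, map_zero, mul_zero]
      have halgp2 : algebraMap Fq Fqm (p.2 i₀) ≠ 0 :=
        fun hc => hp2i₀ (halg_inj (by rw [hc, map_zero]))
      have hrel : ∀ i, p.1 * algebraMap Fq Fqm (p.2 i) = lam₀ * algebraMap Fq Fqm (v₀ i) := by
        intro i
        rw [hcoord i, hzd]
      have hprod : ∀ i, algebraMap Fq Fqm (p.2 i₀) * algebraMap Fq Fqm (v₀ i)
          = algebraMap Fq Fqm (p.2 i) * algebraMap Fq Fqm (v₀ i₀) := by
        intro i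
        have h₁ := hrel i₀
        have h₂ := hrel i
        apply mul_left_cancel₀ h1
        calc p.1 * (algebraMap Fq Fqm (p.2 i₀) * algebraMap Fq Fqm (v₀ i))
            = (p.1 * algebraMap Fq Fqm (p.2 i₀)) * algebraMap Fq Fqm (v₀ i) := by ring
          _ = (lam₀ * algebraMap Fq Fqm (v₀ i₀)) * algebraMap Fq Fqm (v₀ i) := by rw [h₁]
          _ = (lam₀ * algebraMap Fq Fqm (v₀ i)) * algebraMap Fq Fqm (v₀ i₀) := by ring
          _ = (p.1 * algebraMap Fq Fqm (p.2 i)) * algebraMap Fq Fqm (v₀ i₀) := by rw [h₂]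
          _ = p.1 * (algebraMap Fq Fqm (p.2 i) * algebraMap Fq Fqm (v₀ i₀)) := by ring
      have hfst : z i₀ * (algebraMap Fq Fqm (p.2 i₀))⁻¹ = p.1 := by
        rw [← hcoord i₀]
        field_simp
      have hsnd : (fun i => p.2 i₀ * (v₀ i₀)⁻¹ * v₀ i) = p.2 := by
        funext i
        apply halg_inj
        rw [map_mul, map_mul, map_inv₀]
        field_simp
        linear_combination hprod i
      exact Prod.ext hfst hsnd
    · intro c hc
      simp only [Finset.mem_coe, Finset.mem_sdiff, Finset.mem_univ, Finset.mem_singleton, true_and] at hc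
      show c * (v₀ i₀)⁻¹ * v₀ i₀ = c
      rw [mul_assoc, inv_mul_cancel₀ hv₀, mul_one]
  have hstep2 : Tf.card = Sf.card * (q - 1) := by
    rw [Finset.card_eq_sum_card_fiberwise hmapsto, Finset.sum_congr rfl hfib,
      Finset.sum_const, smul_eq_mul]
  -- Step 3 : counting Tf
  have hstep3 : Tf.card = (q ^ r - 1) * (q ^ n - 1) + (q ^ m - q ^ r) * (q ^ r - 1) := by
    have h0E : (0 : Fqm) ∈ E := zero_mem _
    have h0R : (0 : Fin n → Fq) ∈ R := zero_mem _
    have hunion : Tf = ((EF \ {0}) ×ˢ (Finset.univ \ {0}))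
        ∪ ((Finset.univ \ EF) ×ˢ (RF \ {0})) := by
      ext p
      simp only [hTf, Set.mem_toFinset, Set.mem_setOf_eq, Finset.mem_union, Finset.mem_product,
        Finset.mem_sdiff, Finset.mem_univ, Finset.mem_singleton, true_and, hEF, hRF,
        Set.mem_toFinset, SetLike.mem_coe]
      rw [hkey p.1 p.2]
      constructor
      · rintro ⟨h1, h2, (hEm | hRm)⟩
        · exact Or.inl ⟨⟨hEm, h1⟩, h2⟩
        · by_cases hEm : p.1 ∈ E
          · exact Or.inl ⟨⟨hEm, h1⟩, h2⟩
          · exact Or.inr ⟨hEm, hRm, h2⟩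
      · rintro (⟨⟨hEm, h1⟩, h2⟩ | ⟨hEm, hRm, h2⟩)
        · exact ⟨h1, h2, Or.inl hEm⟩
        · refine ⟨fun hc => hEm (hc ▸ h0E), h2, Or.inr hRm⟩
    have hdisj : Disjoint ((EF \ {0}) ×ˢ (Finset.univ \ {0}))
        (((Finset.univ \ EF) : Finset Fqm) ×ˢ (RF \ {0})) := by
      rw [Finset.disjoint_left]
      rintro ⟨a, b⟩ hp1 hp2
      simp only [Finset.mem_product, Finset.mem_sdiff, Finset.mem_univ, Finset.mem_singleton,
        true_and] at hp1 hp2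
      exact hp2.1 hp1.1.1
    rw [hunion, Finset.card_union_of_disjoint hdisj, Finset.card_product, Finset.card_product]
    have c1 : (EF \ {0}).card = q ^ r - 1 := by
      rw [Finset.card_sdiff_of_subset (by simp [hEF, Set.mem_toFinset]), hEFcard,
        Finset.card_singleton]
    have c2 : ((Finset.univ \ {0}) : Finset (Fin n → Fq)).card = q ^ n - 1 := by
      rw [Finset.card_sdiff_of_subset (by simp), Finset.card_univ, hcardFn, Finset.card_singleton]
    have c3 : ((Finset.univ \ EF) : Finset Fqm).card = q ^ m - q ^ r := by
      rw [Finset.card_sdiff_of_subset (Finset.subset_univ _), Finset.card_univ, hcardFqm, hEFcard]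
    have c4 : (RF \ {0}).card = q ^ r - 1 := by
      rw [Finset.card_sdiff_of_subset (by simp [hRF, Set.mem_toFinset]), hRFcard,
        Finset.card_singleton]
    rw [c1, c2, c3, c4]
  -- final arithmetic
  have h1 : 1 ≤ q ^ r := Nat.one_le_pow _ _ (by omega)
  have h2 : 1 ≤ q ^ n := Nat.one_le_pow _ _ (by omega)
  have h3 : q ^ r ≤ q ^ m := Nat.pow_le_pow_right (by omega) hrm
  have h4 : 1 ≤ q := by omega
  have hnat : Sf.card * (q - 1) = (q ^ r - 1) * (q ^ n - 1) + (q ^ m - q ^ r) * (q ^ r - 1) := by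
    rw [← hstep2, hstep3]
  have hkeyeq : (Sf.card : ℚ) * ((q : ℚ) - 1)
      = ((q:ℚ)^r - 1) * ((q:ℚ)^n - 1) + ((q:ℚ)^m - (q:ℚ)^r) * ((q:ℚ)^r - 1) := by
    have hcast := congrArg (Nat.cast : ℕ → ℚ) hnat
    push_cast [Nat.cast_sub h1, Nat.cast_sub h2, Nat.cast_sub h3, Nat.cast_sub h4] at hcast
    convert hcast using 2
  have hqne : (q : ℚ) - 1 ≠ 0 := by
    have hq2' : (2 : ℚ) ≤ (q : ℚ) := by exact_mod_cast hq2
    intro hc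
    have : (q : ℚ) = 1 := by linarith
    linarith
  have hs : (Sf.card : ℚ) = (((q:ℚ)^m - (q:ℚ)^r) * ((q:ℚ)^r - 1)
      + ((q:ℚ)^r - 1) * ((q:ℚ)^n - 1)) / ((q:ℚ) - 1) := by
    rw [eq_div_iff hqne]
    linear_combination hkeyeq
  rw [hstep1]
  push_cast
  rw [hs, add_div, ← add_assoc]


end
end

section
/- If c₁, c₂ ∈ GF(q^m)^n satisfy d_R(c₁,c₂) = r, then for all 0 ≤ s ≤ r, |B_s(c₁) ∩ B_{r−s}(c₂)| = q^{s(r−s)}·[r s]_q. -/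
open scoped BigOperators

noncomputable section

namespace Stmt8Aux

set_option linter.unusedSectionVars false

open Module Submodule LinearMap

attribute [local instance] Fintype.ofFinite

variable {Fq : Type} [Field Fq] [Fintype Fq]

lemma card_hom (M N : Type) [AddCommGroup M] [Module Fq M] [AddCommGroup N] [Module Fq N]
    [FiniteDimensional Fq M] [FiniteDimensional Fq N] :
    Nat.card (M →ₗ[Fq] N) = Fintype.card Fq ^ (finrank Fq M * finrank Fq N) := by
  rw [Nat.card_congr (LinearMap.toMatrix (finBasis Fq M) (finBasis Fq N)).toEquiv]
  show Nat.card (Matrix (Fin (finrank Fq N)) (Fin (finrank Fq M)) Fq) = _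
  rw [show (Matrix (Fin (finrank Fq N)) (Fin (finrank Fq M)) Fq)
      = (Fin (finrank Fq N) → Fin (finrank Fq M) → Fq) from rfl,
    Nat.card_fun, Nat.card_fun, Nat.card_eq_fintype_card (α := Fq)]
  simp only [Nat.card_eq_fintype_card, Fintype.card_fin]
  rw [← pow_mul, mul_comm (finrank Fq M)]

lemma card_proj {E : Type} [AddCommGroup E] [Module Fq E] [FiniteDimensional Fq E]
    (V : Submodule Fq E) :
    Nat.card {f : E →ₗ[Fq] V // ∀ x : V, f x = x}
      = Fintype.card Fq ^ ((finrank Fq E - finrank Fq V) * finrank Fq V) := by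
  obtain ⟨W, hW⟩ := V.exists_isCompl
  let f₀ : E →ₗ[Fq] V := V.linearProjOfIsCompl W hW
  have hf₀ : ∀ x : V, f₀ x = x := fun x => Submodule.linearProjOfIsCompl_apply_left hW x
  let e : {f : E →ₗ[Fq] V // ∀ x : V, f x = x} ≃ ((E ⧸ V) →ₗ[Fq] V) :=
  { toFun := fun f => V.liftQ (f.1 - f₀) (by
      intro x hx
      have h1 := f.2 ⟨x, hx⟩
      have h2 := hf₀ ⟨x, hx⟩
      simp only [LinearMap.mem_ker, LinearMap.sub_apply]
      rw [show ((⟨x, hx⟩ : V) : E) = x from rfl] at h1 h2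
      rw [h1, h2, sub_self])
    invFun := fun g => ⟨f₀ + g ∘ₗ V.mkQ, by
      intro x
      simp only [LinearMap.add_apply, LinearMap.comp_apply, Submodule.mkQ_apply]
      rw [hf₀, (Submodule.Quotient.mk_eq_zero V).2 x.2, map_zero, add_zero]⟩
    left_inv := fun f => by
      apply Subtype.ext
      ext x
      simp [f₀]
    right_inv := fun g => by
      apply Submodule.linearMap_qext
      ext x
      simp }
  rw [Nat.card_congr e, card_hom]
  congr 2
  have := Submodule.finrank_quotient_add_finrank V
  omega


variable {E : Type} [AddCommGroup E] [Module Fq E] [FiniteDimensional Fq E] [Finite E]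

local notation "q" => Fintype.card Fq

instance : Finite (Submodule Fq E) :=
  Finite.of_injective (fun V => (V : Set E)) SetLike.coe_injective

instance : Finite (Module.End Fq E) :=
  Finite.of_injective (fun f => (f : E → E)) DFunLike.coe_injective

lemma span_coe_eq {s : ℕ} {V : Submodule Fq E} (hV : finrank Fq ↥V = s) {w : Fin s → ↥V}
    (hw : LinearIndependent Fq w) :
    span Fq (Set.range (fun i => (w i : E))) = V := by
  have h1 : Set.range (fun i => (w i : E)) = V.subtype '' Set.range w := by
    rw [← Set.range_comp]; rfl
  rw [h1, ← Submodule.map_span,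
    hw.span_eq_top_of_card_eq_finrank' (by simpa using hV.symm),
    Submodule.map_top, Submodule.range_subtype]

lemma card_grassmannian {s : ℕ} (hs : s ≤ finrank Fq E) :
    Nat.card {V : Submodule Fq E // finrank Fq ↥V = s} * ∏ i : Fin s, (q ^ s - q ^ i.val)
      = ∏ i : Fin s, (q ^ finrank Fq E - q ^ i.val) := by
  classical
  have key : Nat.card (Σ V : {V : Submodule Fq E // finrank Fq ↥V = s},
      {w : Fin s → ↥V.1 // LinearIndependent Fq w})
      = Nat.card {v : Fin s → E // LinearIndependent Fq v} := by
    apply Nat.card_eq_of_bijective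
      (fun p => ⟨fun i => (p.2.1 i : E), p.2.2.map' p.1.1.subtype (Submodule.ker_subtype _)⟩)
    constructor
    · rintro ⟨⟨V, hV⟩, ⟨w, hw⟩⟩ ⟨⟨V', hV'⟩, ⟨w', hw'⟩⟩ h
      have hcoe : (fun i => (w i : E)) = fun i => (w' i : E) := congrArg Subtype.val h
      have hVV : V = V' := by rw [← span_coe_eq hV hw, ← span_coe_eq hV' hw', hcoe]
      subst hVV
      have hww : w = w' := funext fun i => Subtype.ext (congrFun hcoe i)
      subst hww
      rfl
    · rintro ⟨v, hv⟩
      refine ⟨⟨⟨span Fq (Set.range v), ?_⟩,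
        ⟨fun i => ⟨v i, Submodule.subset_span ⟨i, rfl⟩⟩, ?_⟩⟩, rfl⟩
      · rw [finrank_span_eq_card hv, Fintype.card_fin]
      · exact LinearIndependent.of_comp (Submodule.subtype _) hv
  have h2 : ∀ V : {V : Submodule Fq E // finrank Fq ↥V = s},
      Nat.card {w : Fin s → ↥V.1 // LinearIndependent Fq w}
        = ∏ i : Fin s, (q ^ s - q ^ i.val) := by
    intro V
    rw [card_linearIndependent (k := s) (by rw [V.2]), V.2]
  rw [← card_linearIndependent hs, ← key]
  simp only [Nat.card_eq_fintype_card]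
  rw [Fintype.card_sigma]
  simp_rw [← Nat.card_eq_fintype_card (α := {w : Fin s → _ // LinearIndependent Fq w}), h2]
  rw [Finset.sum_const, Finset.card_univ, smul_eq_mul]

lemma card_idem {r s : ℕ} (hr : finrank Fq E = r) :
    Nat.card {f : Module.End Fq E //
        IsIdempotentElem f ∧ finrank Fq (LinearMap.range f) = s}
      = Nat.card {V : Submodule Fq E // finrank Fq ↥V = s} * q ^ ((r - s) * s) := by
  classical
  have key : Nat.card (Σ V : {V : Submodule Fq E // finrank Fq ↥V = s},
      {f : Module.End Fq E // IsIdempotentElem f ∧ LinearMap.range f = V.1})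
      = Nat.card {f : Module.End Fq E //
          IsIdempotentElem f ∧ finrank Fq (LinearMap.range f) = s} := by
    apply Nat.card_eq_of_bijective
      (fun p => ⟨p.2.1, p.2.2.1, by rw [p.2.2.2]; exact p.1.2⟩)
    constructor
    · rintro ⟨⟨V, hV⟩, ⟨f, hf⟩⟩ ⟨⟨V', hV'⟩, ⟨f', hf'⟩⟩ h
      have hff : f = f' := congrArg Subtype.val h
      subst hff
      have hVV : V = V' := hf.2.symm.trans hf'.2
      subst hVV
      rfl
    · rintro ⟨f, hf1, hf2⟩
      exact ⟨⟨⟨LinearMap.range f, hf2⟩, ⟨f, hf1, rfl⟩⟩, rfl⟩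
  have h2 : ∀ V : {V : Submodule Fq E // finrank Fq ↥V = s},
      Nat.card {f : Module.End Fq E // IsIdempotentElem f ∧ LinearMap.range f = V.1}
        = q ^ ((r - s) * s) := by
    intro V
    rw [Nat.card_congr V.1.isIdempotentElemEquiv, card_proj, hr, V.2]
  rw [← key]
  simp only [Nat.card_eq_fintype_card]
  rw [Fintype.card_sigma]
  simp_rw [← Nat.card_eq_fintype_card (α := {f : Module.End Fq E // IsIdempotentElem f ∧ _}), h2]
  rw [Finset.sum_const, Finset.card_univ, smul_eq_mul]

end Stmt8Aux

namespace Stmt8Aux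

section MoreAux

open Module Submodule LinearMap

variable {Fq : Type} [Field Fq] {Fqm : Type} [Field Fqm] [Algebra Fq Fqm] {n : ℕ}

lemma span_add_le (u v : Fin n → Fqm) :
    Submodule.span Fq (Set.range (u + v))
      ≤ Submodule.span Fq (Set.range u) ⊔ Submodule.span Fq (Set.range v) := by
  rw [Submodule.span_le]
  rintro _ ⟨i, rfl⟩
  exact add_mem (Submodule.mem_sup_left (Submodule.subset_span ⟨i, rfl⟩))
    (Submodule.mem_sup_right (Submodule.subset_span ⟨i, rfl⟩))

lemma span_neg_eq (u : Fin n → Fqm) :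
    Submodule.span Fq (Set.range (-u)) = Submodule.span Fq (Set.range u) := by
  apply le_antisymm
  · rw [Submodule.span_le]
    rintro _ ⟨i, rfl⟩
    exact neg_mem (Submodule.subset_span ⟨i, rfl⟩)
  · rw [Submodule.span_le]
    rintro _ ⟨i, rfl⟩
    rw [show u i = -((-u) i) by simp]
    exact neg_mem (Submodule.subset_span ⟨i, rfl⟩)

lemma finrank_span_coe (X : Submodule Fq Fqm) (w : Fin n → X) :
    finrank Fq (Submodule.span Fq (Set.range (fun i => (w i : Fqm))))
      = finrank Fq (Submodule.span Fq (Set.range w)) := by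
  have h1 : Set.range (fun i => (w i : Fqm)) = X.subtype '' Set.range w := by
    rw [← Set.range_comp]; rfl
  rw [h1, ← Submodule.map_span, Submodule.finrank_map_subtype_eq]

lemma cast_alpha {q e s : ℕ} (hq : 1 ≤ q) (hse : s ≤ e) :
    ((∏ i : Fin s, (q ^ e - q ^ i.val) : ℕ) : ℚ) = alphaQ q (e : ℤ) s := by
  unfold alphaQ
  rw [← Fin.prod_univ_eq_prod_range (fun i => ((q : ℚ)) ^ (e : ℤ) - (q : ℚ) ^ i) s,
    Nat.cast_prod]
  apply Finset.prod_congr rfl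
  intro i _
  have hle : q ^ i.val ≤ q ^ e :=
    Nat.pow_le_pow_right hq ((Nat.le_of_lt i.isLt).trans hse)
  rw [Nat.cast_sub hle, zpow_natCast]
  push_cast
  ring

end MoreAux

section CondAux
set_option linter.unusedSectionVars false

open Module Submodule LinearMap

variable {Fq : Type} [Field Fq] [Fintype Fq]
variable {E : Type} [AddCommGroup E] [Module Fq E] [FiniteDimensional Fq E] [Finite E]

lemma card_cond {r s : ℕ} (hr : finrank Fq E = r) (hss : s ≤ r) :
    Nat.card {f : Module.End Fq E // finrank Fq (LinearMap.range f) ≤ s ∧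
        finrank Fq (LinearMap.range (1 - f)) ≤ r - s}
      = Nat.card {f : Module.End Fq E //
          IsIdempotentElem f ∧ finrank Fq (LinearMap.range f) = s} := by
  apply Nat.card_congr (Equiv.subtypeEquivRight ?_)
  intro f
  constructor
  · rintro ⟨h1, h2⟩
    have hsup : LinearMap.range f ⊔ LinearMap.range (1 - f) = ⊤ := by
      rw [eq_top_iff]
      rintro z -
      have hz : z = f z + (1 - f) z := by simp [LinearMap.sub_apply]
      rw [hz]
      exact add_mem (Submodule.mem_sup_left (LinearMap.mem_range_self f z))
        (Submodule.mem_sup_right (LinearMap.mem_range_self (1 - f) z))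
    have hdim := Submodule.finrank_sup_add_finrank_inf_eq
      (LinearMap.range f) (LinearMap.range (1 - f))
    rw [hsup, finrank_top, hr] at hdim
    have hinf0 : finrank Fq ↥(LinearMap.range f ⊓ LinearMap.range (1 - f)) = 0 := by omega
    have hinf : LinearMap.range f ⊓ LinearMap.range (1 - f) = ⊥ :=
      Submodule.finrank_eq_zero.mp hinf0
    have hidem : IsIdempotentElem f := by
      show f * f = f
      ext z
      rw [Module.End.mul_apply]
      have hmem : f z - f (f z) ∈ LinearMap.range f ⊓ LinearMap.range (1 - f) := by
        constructor
        · exact ⟨z - f z, by rw [map_sub]⟩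
        · exact ⟨f z, by simp [LinearMap.sub_apply]⟩
      rw [hinf, Submodule.mem_bot, sub_eq_zero] at hmem
      exact hmem.symm
    exact ⟨hidem, by omega⟩
  · rintro ⟨hidem, hrank⟩
    have hker : LinearMap.range (1 - f) = LinearMap.ker f := by
      ext z
      constructor
      · rintro ⟨w, rfl⟩
        have hw : f (f w) = f w := by
          have := congrArg (fun g : Module.End Fq E => g w) hidem
          simpa [Module.End.mul_apply] using this
        simp [LinearMap.sub_apply, hw]
      · intro hz
        rw [LinearMap.mem_ker] at hz
        exact ⟨z, by simp [LinearMap.sub_apply, hz]⟩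
    refine ⟨le_of_eq hrank, ?_⟩
    rw [hker]
    have hrn := LinearMap.finrank_range_add_finrank_ker f
    rw [hr, hrank] at hrn
    omega

end CondAux

end Stmt8Aux


/-- If `d_R(c₁, c₂) = r` then `|B_s(c₁) ∩ B_{r-s}(c₂)| = q^{s(r-s)} [r s]_q` for `0 ≤ s ≤ r`. -/
theorem stmt8 (q m n r s : ℕ) (Fq Fqm : Type) [Field Fq] [Fintype Fq] [Field Fqm] [Fintype Fqm]
    [Algebra Fq Fqm] (hq : Fintype.card Fq = q) (hm : Module.finrank Fq Fqm = m)
    (hr : r ≤ min m n) (hs : s ≤ r)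
    (c₁ c₂ : Fin n → Fqm) (h : rankWeight Fq (c₁ - c₂) = r) :
    (Nat.card ↥(rankBall Fq s c₁ ∩ rankBall Fq (r - s) c₂) : ℚ)
      = (q : ℚ) ^ (s * (r - s)) * gaussQ q r s := by
  classical
  subst hq
  have hq1 : 0 < Fintype.card Fq := Fintype.card_pos
  have hq2 : 1 < Fintype.card Fq := Fintype.one_lt_card
  set x : Fin n → Fqm := c₁ - c₂ with hxdef
  set X : Submodule Fq Fqm := Submodule.span Fq (Set.range x) with hXdef
  have hXr : Module.finrank Fq X = r := h
  let xX : Fin n → X := fun i => ⟨x i, Submodule.subset_span ⟨i, rfl⟩⟩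
  have hxX : Submodule.span Fq (Set.range xX) = ⊤ := by
    apply Submodule.map_injective_of_injective (Submodule.injective_subtype X)
    rw [Submodule.map_span, ← Set.range_comp, Submodule.map_top, Submodule.range_subtype]
    rfl
  let vec : Module.End Fq X → (Fin n → Fqm) := fun f i => (f (xX i) : Fqm)
  have hrange : ∀ f : Module.End Fq X,
      LinearMap.range f = Submodule.span Fq (Set.range (fun i => f (xX i))) := by
    intro f
    rw [LinearMap.range_eq_map, ← hxX, Submodule.map_span, ← Set.range_comp]
    rfl
  have hvec_rank : ∀ f : Module.End Fq X,
      rankWeight Fq (vec f) = Module.finrank Fq (LinearMap.range f) := by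
    intro f
    show Module.finrank Fq (Submodule.span Fq (Set.range (vec f))) = _
    rw [show vec f = fun i => ((fun j => f (xX j)) i : Fqm) from rfl,
      Stmt8Aux.finrank_span_coe X (fun i => f (xX i)), ← hrange]
  have hvec_sub : ∀ f : Module.End Fq X, x - vec f = vec (1 - f) := by
    intro f
    funext i
    show x i - (f (xX i) : Fqm) = (((1 - f) (xX i) : X) : Fqm)
    simp only [LinearMap.sub_apply, Module.End.one_apply, Submodule.coe_sub]
    rfl
  let Φ : {f : Module.End Fq X // Module.finrank Fq (LinearMap.range f) ≤ s ∧
        Module.finrank Fq (LinearMap.range (1 - f)) ≤ r - s} →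
      ↥(rankBall Fq s c₁ ∩ rankBall Fq (r - s) c₂) :=
    fun f => ⟨c₁ - vec f.1, by
      constructor
      · show rankWeight Fq (c₁ - vec f.1 - c₁) ≤ s
        rw [show c₁ - vec f.1 - c₁ = -(vec f.1) from sub_sub_cancel_left c₁ (vec f.1)]
        show Module.finrank Fq (Submodule.span Fq (Set.range (-(vec f.1)))) ≤ s
        rw [Stmt8Aux.span_neg_eq]
        exact (hvec_rank f.1).trans_le f.2.1
      · show rankWeight Fq (c₁ - vec f.1 - c₂) ≤ r - s
        rw [show c₁ - vec f.1 - c₂ = x - vec f.1 from sub_right_comm c₁ (vec f.1) c₂,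
          hvec_sub f.1]
        exact (hvec_rank (1 - f.1)).trans_le f.2.2⟩
  have hbij : Function.Bijective Φ := by
    constructor
    · intro f g hfg
      apply Subtype.ext
      have h0 : c₁ - vec f.1 = c₁ - vec g.1 := congrArg Subtype.val hfg
      have h1 : vec f.1 = vec g.1 := sub_right_injective h0
      exact LinearMap.ext_on_range hxX fun i => Subtype.ext (congrFun h1 i)
    · rintro ⟨y, hy1, hy2⟩
      set u : Fin n → Fqm := c₁ - y with hudef
      set v : Fin n → Fqm := y - c₂ with hvdef
      have hu : Module.finrank Fq (Submodule.span Fq (Set.range u)) ≤ s := by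
        have h1 : rankWeight Fq (y - c₁) ≤ s := hy1
        rw [show y - c₁ = -u from (neg_sub c₁ y).symm] at h1
        have h2 : rankWeight Fq (-u) =
            Module.finrank Fq (Submodule.span Fq (Set.range u)) := by
          show Module.finrank Fq (Submodule.span Fq (Set.range (-u))) = _
          rw [Stmt8Aux.span_neg_eq]
        rwa [h2] at h1
      have hv : Module.finrank Fq (Submodule.span Fq (Set.range v)) ≤ r - s := hy2
      have hxuv : x = u + v := by
        funext i
        simp only [hudef, hvdef, hxdef, Pi.add_apply, Pi.sub_apply]
        ring
      have hle : X ≤ Submodule.span Fq (Set.range u) ⊔ Submodule.span Fq (Set.range v) := by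
        rw [hXdef, hxuv]
        exact Stmt8Aux.span_add_le u v
      have hdim := Submodule.finrank_sup_add_finrank_inf_eq
        (Submodule.span Fq (Set.range u)) (Submodule.span Fq (Set.range v))
      have hXeq : X = Submodule.span Fq (Set.range u) ⊔ Submodule.span Fq (Set.range v) :=
        Submodule.eq_of_le_of_finrank_le hle (by rw [hXr]; omega)
      have hinf : Submodule.span Fq (Set.range u) ⊓ Submodule.span Fq (Set.range v) = ⊥ := by
        apply Submodule.finrank_eq_zero.mp
        rw [← hXeq, hXr] at hdim
        omega
      have huX : Submodule.span Fq (Set.range u) ≤ X := by rw [hXeq]; exact le_sup_left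
      set ψx : (Fin n → Fq) →ₗ[Fq] Fqm := Fintype.linearCombination Fq x with hψx
      set ψu : (Fin n → Fq) →ₗ[Fq] Fqm := Fintype.linearCombination Fq u with hψu
      set ψv : (Fin n → Fq) →ₗ[Fq] Fqm := Fintype.linearCombination Fq v with hψv
      have hrx : LinearMap.range ψx = X := by rw [hψx, Fintype.range_linearCombination]
      have hru : LinearMap.range ψu = Submodule.span Fq (Set.range u) := by
        rw [hψu, Fintype.range_linearCombination]
      have hrv : LinearMap.range ψv = Submodule.span Fq (Set.range v) := by
        rw [hψv, Fintype.range_linearCombination]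
      have hker : LinearMap.ker ψx ≤ LinearMap.ker ψu := by
        intro a ha
        rw [LinearMap.mem_ker] at ha ⊢
        have hsum : ψu a + ψv a = 0 := by
          rw [← ha]
          simp only [hψx, hψu, hψv, Fintype.linearCombination_apply, hxuv, Pi.add_apply,
            smul_add, Finset.sum_add_distrib]
        have hmem : ψu a ∈ Submodule.span Fq (Set.range u) ⊓ Submodule.span Fq (Set.range v) := by
          constructor
          · exact hru ▸ LinearMap.mem_range_self ψu a
          · rw [show ψu a = -(ψv a) from eq_neg_of_add_eq_zero_left hsum]
            exact neg_mem (hrv ▸ LinearMap.mem_range_self ψv a)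
        rw [hinf, Submodule.mem_bot] at hmem
        exact hmem
      have huX' : ∀ a, ψu a ∈ X := fun a => huX (hru ▸ LinearMap.mem_range_self ψu a)
      set ψu' : (Fin n → Fq) →ₗ[Fq] X := LinearMap.codRestrict X ψu huX' with hψu'
      have hkeru' : LinearMap.ker ψx ≤ LinearMap.ker ψu' := by
        rw [hψu', LinearMap.ker_codRestrict]
        exact hker
      set e : ((Fin n → Fq) ⧸ LinearMap.ker ψx) ≃ₗ[Fq] X :=
        ψx.quotKerEquivRange.trans (LinearEquiv.ofEq _ _ hrx) with he
      set f : Module.End Fq X :=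
        ((LinearMap.ker ψx).liftQ ψu' hkeru').comp e.symm.toLinearMap with hf
      have hfx : ∀ i, f (xX i) = ⟨u i, huX (Submodule.subset_span ⟨i, rfl⟩)⟩ := by
        intro i
        have h1 : e ((LinearMap.ker ψx).mkQ (Pi.single i 1)) = xX i := by
          apply Subtype.ext
          show ((LinearEquiv.ofEq _ _ hrx)
            (ψx.quotKerEquivRange ((LinearMap.ker ψx).mkQ (Pi.single i 1))) : Fqm) = x i
          rw [Submodule.mkQ_apply]
          simp only [LinearMap.quotKerEquivRange_apply_mk, LinearEquiv.coe_ofEq_apply]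
          rw [hψx, Fintype.linearCombination_apply_single, one_smul]
        have h2 : e.symm (xX i) = (LinearMap.ker ψx).mkQ (Pi.single i 1) := by
          rw [← h1, LinearEquiv.symm_apply_apply]
        rw [hf]
        show ((LinearMap.ker ψx).liftQ ψu' hkeru') (e.symm (xX i)) = _
        rw [h2, Submodule.mkQ_apply, Submodule.liftQ_apply]
        apply Subtype.ext
        show ψu (Pi.single i 1) = u i
        rw [hψu, Fintype.linearCombination_apply_single, one_smul]
      have hvecf : vec f = u := funext fun i => congrArg Subtype.val (hfx i)
      have hcond1 : Module.finrank Fq (LinearMap.range f) ≤ s := by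
        rw [← hvec_rank f, hvecf]
        exact hu
      have hcond2 : Module.finrank Fq (LinearMap.range (1 - f)) ≤ r - s := by
        have hv2 : vec (1 - f) = v := by
          rw [← hvec_sub f, hvecf]
          funext i
          simp only [hudef, hvdef, hxdef, Pi.sub_apply]
          ring
        rw [← hvec_rank (1 - f), hv2]
        exact hv
      refine ⟨⟨f, hcond1, hcond2⟩, ?_⟩
      apply Subtype.ext
      show c₁ - vec f = y
      rw [hvecf, hudef]
      funext i
      simp only [Pi.sub_apply]
      ring
  have hcard : Nat.card ↥(rankBall Fq s c₁ ∩ rankBall Fq (r - s) c₂)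
      = Nat.card {f : Module.End Fq X // Module.finrank Fq (LinearMap.range f) ≤ s ∧
          Module.finrank Fq (LinearMap.range (1 - f)) ≤ r - s} :=
    (Nat.card_eq_of_bijective Φ hbij).symm
  rw [hcard, Stmt8Aux.card_cond hXr hs, Stmt8Aux.card_idem hXr]
  have hgrass := Stmt8Aux.card_grassmannian (Fq := Fq) (E := X) (s := s) (by rw [hXr]; exact hs)
  rw [hXr] at hgrass
  have hA : ((∏ i : Fin s, (Fintype.card Fq ^ s - Fintype.card Fq ^ i.val) : ℕ) : ℚ)
      = alphaQ (Fintype.card Fq) (s : ℤ) s := Stmt8Aux.cast_alpha hq1 le_rfl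
  have hB : ((∏ i : Fin s, (Fintype.card Fq ^ r - Fintype.card Fq ^ i.val) : ℕ) : ℚ)
      = alphaQ (Fintype.card Fq) (r : ℤ) s := Stmt8Aux.cast_alpha hq1 hs
  have hA0 : alphaQ (Fintype.card Fq) (s : ℤ) s ≠ 0 := by
    rw [← hA]
    have hpos : 0 < ∏ i : Fin s, (Fintype.card Fq ^ s - Fintype.card Fq ^ i.val) :=
      Finset.prod_pos fun i _ => Nat.sub_pos_of_lt (Nat.pow_lt_pow_right hq2 i.isLt)
    exact_mod_cast hpos.ne'
  have hG : ((Nat.card {V : Submodule Fq X // Module.finrank Fq ↥V = s}) : ℚ)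
      = gaussQ (Fintype.card Fq) r s := by
    rw [gaussQ, eq_div_iff hA0, ← hA, ← hB, ← Nat.cast_mul]
    exact_mod_cast congrArg (Nat.cast (R := ℚ)) hgrass
  rw [Nat.cast_mul, hG, Nat.cast_pow, Nat.mul_comm (r - s) s, mul_comm]

end
end
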